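/- arXiv:2004.04088 — 7 statements merged into one kernel-verified Lean document; each statement's English description precedes it below -/
import Mathlib

section
/- If a resolvable Golomb ruler RGR(k,L) exists (with k ≥ 2), then L - ⌊L/k⌋ ≥ k(k-1)/2. -/
/-- A Golomb ruler: a finite set of integers all of whose differences of
ordered pairs of distinct elements are pairwise distinct. -/
def IsGolombRuler (X : Finset ℤ) : Prop :=
  ∀ a ∈ X, ∀ b ∈ X, ∀ c ∈ X, ∀ d ∈ X,
    a - b = c - d → (a = b ∧ c = d) ∨ (a = c ∧ b = d)

/-- `X` has length `L`: the difference between its maximum and minimum elements is `L`. -/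
def HasLength (X : Finset ℤ) (L : ℕ) : Prop :=
  ∃ m ∈ X, ∃ M ∈ X, (∀ x ∈ X, m ≤ x ∧ x ≤ M) ∧ M - m = (L : ℤ)

/-- The elements of `X` cover all `k` residue classes modulo `k`. -/
def CoversResidues (k : ℕ) (X : Finset ℤ) : Prop :=
  ∀ r : ZMod k, ∃ x ∈ X, (x : ZMod k) = r

/-- A resolvable Golomb ruler RGR(k,L). -/
def IsRGR (k L : ℕ) (X : Finset ℤ) : Prop :=
  X.card = k ∧ IsGolombRuler X ∧ HasLength X L ∧ CoversResidues k X

/-!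
Map each pair `a < b` of marks to the gap `b - a`. The Golomb property makes this injective,
the length bounds the gap by `L`, and since the `k` marks lie in distinct residue classes modulo
`k`, no gap is a multiple of `k`. So the `k(k-1)/2` gaps are distinct elements of `(0, L]` avoiding
the `⌊L/k⌋` multiples of `k`.
-/

open Finset

theorem Nat.card_Ioc_filter_not_dvd (n k : ℕ) : #{d ∈ Ioc 0 n | ¬ k ∣ d} = n - n / k := by
  have hsplit := card_filter_add_card_filter_not (s := Ioc 0 n) (p := (k ∣ ·))
  rw [Nat.Ioc_filter_dvd_card_eq_div, Nat.card_Ioc] at hsplit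
  omega

theorem IsGolombRuler.choose_two_le_card {X : Finset ℤ} (hX : IsGolombRuler X) {S : Finset ℕ}
    (hS : ∀ a ∈ X, ∀ b ∈ X, a < b → (b - a).natAbs ∈ S) :
    (#X).choose 2 ≤ #S := by
  rw [← card_product_filter_lt]
  refine card_le_card_of_injOn (fun p => (p.2 - p.1).natAbs) (fun p hp => ?_) ?_
  · simp only [coe_filter, mem_product, Set.mem_ofPred_eq] at hp
    exact hS _ hp.1.1 _ hp.1.2 hp.2
  · rintro ⟨a, b⟩ hab ⟨c, d⟩ hcd hgap
    simp only [coe_filter, mem_product, Set.mem_ofPred_eq] at hab hcd hgap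
    rcases hX b hab.1.2 a hab.1.1 d hcd.1.2 c hcd.1.1 (by omega) with ⟨rfl, -⟩ | ⟨rfl, rfl⟩
    · exact absurd hab.2 (lt_irrefl _)
    · rfl

theorem HasLength.sub_le {X : Finset ℤ} {L : ℕ} (hX : HasLength X L) {a b : ℤ} (ha : a ∈ X)
    (hb : b ∈ X) : b - a ≤ L := by
  obtain ⟨m, -, M, -, hbound, hlen⟩ := hX
  linarith [(hbound a ha).1, (hbound b hb).2]

theorem CoversResidues.injOn_intCast {X : Finset ℤ} (hX : CoversResidues #X X) :
    Set.InjOn (Int.cast : ℤ → ZMod #X) X := by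
  rcases (#X).eq_zero_or_pos with h0 | hpos
  · simp [card_eq_zero.mp h0]
  have : NeZero #X := ⟨hpos.ne'⟩
  refine injOn_of_card_image_eq ?_
  rw [eq_univ_of_forall fun r => mem_image.mpr (hX r), card_univ, ZMod.card]

theorem CoversResidues.not_dvd_sub {X : Finset ℤ} (hX : CoversResidues #X X) {a b : ℤ}
    (ha : a ∈ X) (hb : b ∈ X) (hab : a ≠ b) : ¬ (#X : ℤ) ∣ b - a := fun hdvd =>
  hab (hX.injOn_intCast ha hb ((ZMod.intCast_eq_intCast_iff_dvd_sub a b _).mpr hdvd))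

theorem rgr_counting_bound_general (k L : ℕ)
    (h : ∃ X : Finset ℤ, IsRGR k L X) :
    L - L / k ≥ k * (k - 1) / 2 := by
  obtain ⟨X, rfl, hG, hlen, hres⟩ := h
  rw [← Nat.choose_two_right, ← Nat.card_Ioc_filter_not_dvd]
  refine hG.choose_two_le_card fun a ha b hb hab => ?_
  have hle := hlen.sub_le ha hb
  have hndvd := hres.not_dvd_sub ha hb hab.ne
  rw [Int.natCast_dvd] at hndvd
  simp only [mem_filter, mem_Ioc]
  omega

/-- If a resolvable Golomb ruler RGR(k,L) exists (k ≥ 2), then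
`L - ⌊L/k⌋ ≥ k(k-1)/2`. -/
theorem rgr_counting_bound (k L : ℕ) (hk : 2 ≤ k)
    (h : ∃ X : Finset ℤ, IsRGR k L X) :
    L - L / k ≥ k * (k - 1) / 2 :=
  rgr_counting_bound_general k L h
end

section
/- Suppose a resolvable Golomb ruler RGR(k,L) exists with k ≥ 2. If k is even, then L ≥ k²/2 − 1, and if k is odd, then L ≥ (k²−1)/2. -/
private theorem rgr_key (k L : ℕ) (hk : 2 ≤ k) (X : Finset ℤ) (hX : IsRGR k L X) :
    k * k - k ≤ 2 * (L - L / k) := by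
  obtain ⟨hcard, hG, ⟨m, hm, M, hM, hbound, hlen⟩, hres⟩ := hX
  have hk0 : 0 < k := by omega
  haveI : NeZero k := ⟨by omega⟩
  -- residues are injective on X
  have himg : X.image (fun x : ℤ => (x : ZMod k)) = Finset.univ := by
    apply Finset.eq_univ_of_forall
    intro r
    obtain ⟨x, hx, hxr⟩ := hres r
    exact Finset.mem_image.mpr ⟨x, hx, hxr⟩
  have hinj : Set.InjOn (fun x : ℤ => (x : ZMod k)) X := by
    rw [← Finset.card_image_iff, himg, Finset.card_univ, ZMod.card, hcard]
  have hndvd : ∀ a ∈ X, ∀ b ∈ X, a ≠ b → ¬ ((k : ℤ) ∣ (b - a)) := by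
    intro a ha b hb hab hdvd
    have h0 : ((b - a : ℤ) : ZMod k) = 0 := (ZMod.intCast_zmod_eq_zero_iff_dvd _ _).mpr hdvd
    push_cast at h0
    exact hab (hinj hb ha (sub_eq_zero.mp h0)).symm
  classical
  set S := (X ×ˢ X).filter (fun p => p.1 < p.2) with hS
  set S' := (X ×ˢ X).filter (fun p => p.2 < p.1) with hS'
  have hScard : S.card = S'.card := by
    apply Finset.card_bij (fun p _ => Prod.swap p)
    · intro p hp
      simp only [hS, hS', Finset.mem_filter, Finset.mem_product] at hp ⊢
      exact ⟨⟨hp.1.2, hp.1.1⟩, hp.2⟩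
    · intro p _ q _ h
      exact Prod.swap_injective h
    · intro p hp
      simp only [hS, hS', Finset.mem_filter, Finset.mem_product] at hp
      exact ⟨Prod.swap p, by simp [hS, Finset.mem_filter, Finset.mem_product, hp.1.1, hp.1.2, hp.2]⟩
  have hunion : X.offDiag = S ∪ S' := by
    ext p
    simp only [Finset.mem_offDiag, hS, hS', Finset.mem_union, Finset.mem_filter,
      Finset.mem_product]
    constructor
    · rintro ⟨h1, h2, h3⟩
      rcases lt_or_gt_of_ne h3 with h | h
      · exact Or.inl ⟨⟨h1, h2⟩, h⟩
      · exact Or.inr ⟨⟨h1, h2⟩, h⟩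
    · rintro (⟨⟨h1, h2⟩, h⟩ | ⟨⟨h1, h2⟩, h⟩) <;> exact ⟨h1, h2, by omega⟩
  have hdisj : Disjoint S S' := by
    rw [Finset.disjoint_filter]
    intro p _ h1 h2
    omega
  have h2S : 2 * S.card = k * k - k := by
    have := Finset.offDiag_card X
    rw [hunion, Finset.card_union_of_disjoint hdisj, hcard] at this
    omega
  -- injective difference map
  have hdiffinj : Set.InjOn (fun p : ℤ × ℤ => (p.2 - p.1).toNat) S := by
    intro p hp q hq hpq
    simp only [hS, Finset.coe_filter, Set.mem_setOf_eq, Finset.mem_product] at hp hq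
    have hpq' : (p.2 - p.1).toNat = (q.2 - q.1).toNat := hpq
    have hp' : p.2 - p.1 = q.2 - q.1 := by omega
    rcases hG p.2 hp.1.2 p.1 hp.1.1 q.2 hq.1.2 q.1 hq.1.1 hp' with ⟨h1, _⟩ | ⟨h1, h2⟩
    · omega
    · exact Prod.ext h2 h1
  have hsub : S.image (fun p : ℤ × ℤ => (p.2 - p.1).toNat) ⊆
      (Finset.Ioc 0 L).filter (fun t => ¬ (k ∣ t)) := by
    intro t ht
    obtain ⟨p, hp, rfl⟩ := Finset.mem_image.mp ht
    simp only [hS, Finset.mem_filter, Finset.mem_product] at hp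
    obtain ⟨⟨h1, h2⟩, h3⟩ := hp
    have hb1 := hbound p.1 h1
    have hb2 := hbound p.2 h2
    simp only [Finset.mem_filter, Finset.mem_Ioc]
    refine ⟨⟨by omega, by omega⟩, ?_⟩
    intro hdvd
    apply hndvd p.1 h1 p.2 h2 (by omega)
    have : ((p.2 - p.1).toNat : ℤ) = p.2 - p.1 := by omega
    exact_mod_cast this ▸ Int.natCast_dvd_natCast.mpr hdvd
  have hTcard : ((Finset.Ioc 0 L).filter (fun t => ¬ (k ∣ t))).card = L - L / k := by
    have h1 := Finset.card_filter_add_card_filter_not (s := Finset.Ioc 0 L)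
      (p := fun t => k ∣ t)
    have h2 := Nat.Ioc_filter_dvd_card_eq_div L k
    simp only [Nat.card_Ioc, Nat.sub_zero] at h1
    omega
  have := (Finset.card_le_card hsub).trans_eq hTcard
  rw [Finset.card_image_of_injOn hdiffinj] at this
  omega

private theorem rgr_arith (k L : ℕ) (hk : 2 ≤ k) (hkey : k * k - k ≤ 2 * (L - L / k)) :
    (Even k → L ≥ k ^ 2 / 2 - 1) ∧ (Odd k → L ≥ (k ^ 2 - 1) / 2) := by
  have hq := Nat.div_add_mod L k
  have hr : L % k < k := Nat.mod_lt _ (by omega)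
  set q := L / k with hqdef
  set r := L % k with hrdef
  have hqL : q ≤ L := Nat.div_le_self _ _
  have hkk : k ≤ k * k := Nat.le_mul_of_pos_left _ (by omega)
  -- integer versions
  have key : (k : ℤ) * k - k ≤ 2 * ((L : ℤ) - q) := by
    zify [hkk, hqL] at hkey
    exact hkey
  have hL : (L : ℤ) = k * q + r := by exact_mod_cast hq.symm
  have hrz : (r : ℤ) < k := by exact_mod_cast hr
  have hr0 : (0 : ℤ) ≤ r := by positivity
  constructor
  · rintro ⟨m, hm⟩
    have hm1 : 1 ≤ m := by omega
    have hsq : k ^ 2 / 2 = 2 * (m * m) := by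
      subst hm
      rw [show (m + m) ^ 2 = 2 * (m * m) * 2 by ring, Nat.mul_div_cancel _ two_pos]
    rw [hsq]
    have hmz : (k : ℤ) = 2 * m := by push_cast [hm]; ring
    have hm1z : (1 : ℤ) ≤ m := by exact_mod_cast hm1
    rw [hmz, hL] at key
    have hQ : (m : ℤ) - 1 ≤ q := by
      by_contra hc
      push_neg at hc
      have h1 : (q : ℤ) ≤ m - 2 := by omega
      nlinarith [mul_le_mul_of_nonneg_left h1 (show (0:ℤ) ≤ 4 * m by linarith)]
    have : 2 * ((m : ℤ) * m) ≤ L + 1 := by rw [hL]; linarith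
    have : 2 * (m * m) ≤ L + 1 := by exact_mod_cast this
    omega
  · rintro ⟨m, hm⟩
    have hm1 : 1 ≤ m := by omega
    have hsq : (k ^ 2 - 1) / 2 = 2 * (m * m) + 2 * m := by
      subst hm
      rw [show (2 * m + 1) ^ 2 - 1 = (2 * (m * m) + 2 * m) * 2 by ring_nf; omega,
        Nat.mul_div_cancel _ two_pos]
    rw [hsq]
    have hmz : (k : ℤ) = 2 * m + 1 := by push_cast [hm]; ring
    have hm1z : (1 : ℤ) ≤ m := by exact_mod_cast hm1
    rw [hmz, hL] at key
    have hQ : (m : ℤ) ≤ q := by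
      by_contra hc
      push_neg at hc
      have h1 : (q : ℤ) ≤ m - 1 := by omega
      nlinarith [mul_le_mul_of_nonneg_left h1 (show (0:ℤ) ≤ 4 * m by linarith)]
    have : 2 * ((m : ℤ) * m) + 2 * m ≤ L := by rw [hL]; linarith
    have : 2 * (m * m) + 2 * m ≤ L := by exact_mod_cast this
    omega

/-- Theorem (bound on RGR length): if an RGR(k,L) exists with k ≥ 2, then
if k is even, L ≥ k²/2 − 1, and if k is odd, L ≥ (k²−1)/2. -/
theorem rgr_length_lower_bound (k L : ℕ) (hk : 2 ≤ k)
    (h : ∃ X : Finset ℤ, IsRGR k L X) :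
    (Even k → L ≥ k ^ 2 / 2 - 1) ∧ (Odd k → L ≥ (k ^ 2 - 1) / 2) := by
  obtain ⟨X, hX⟩ := h
  exact rgr_arith k L hk (rgr_key k L hk X hX)
end

section
/- For every prime p ≥ 3, there exists a resolvable Golomb ruler of order p−1 whose length is at most p² − 2p. -/
open Pointwise

section Sidon

variable {G H : Type*} [AddCommGroup G] [AddCommGroup H]

def IsSidon (S : Set G) : Prop :=
  ∀ a ∈ S, ∀ b ∈ S, ∀ c ∈ S, ∀ d ∈ S, a - b = c - d → (a = b ∧ c = d) ∨ (a = c ∧ b = d)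

theorem isGolombRuler_iff_isSidon {X : Finset ℤ} : IsGolombRuler X ↔ IsSidon (X : Set ℤ) :=
  Iff.rfl

theorem IsSidon.of_mapsTo {S : Set G} {T : Set H} (hT : IsSidon T) (f : G →+ H)
    (hf : S.InjOn f) (hST : S.MapsTo f T) : IsSidon S := by
  intro a ha b hb c hc d hd h
  rcases hT _ (hST ha) _ (hST hb) _ (hST hc) _ (hST hd) (by rw [← map_sub, ← map_sub, h]) with
    ⟨hab, hcd⟩ | ⟨hac, hbd⟩
  · exact Or.inl ⟨hf ha hb hab, hf hc hd hcd⟩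
  · exact Or.inr ⟨hf ha hc hac, hf hb hd hbd⟩

theorem IsSidon.vadd {S : Set G} (hS : IsSidon S) (t : G) : IsSidon (t +ᵥ S) := by
  rintro _ ⟨a, ha, rfl⟩ _ ⟨b, hb, rfl⟩ _ ⟨c, hc, rfl⟩ _ ⟨d, hd, rfl⟩ h
  simp only [vadd_eq_add, add_sub_add_left_eq_sub, add_right_inj] at h ⊢
  exact hS a ha b hb c hc d hd h

end Sidon

theorem AddChar.isSidon_range_graph {A K : Type*} [AddCommGroup A] [CommRing K] [NoZeroDivisors K]
    {ψ : AddChar A K} (hψ : Function.Injective ψ) :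
    IsSidon (Set.range fun a => (ψ a, a)) := by
  rintro _ ⟨a, rfl⟩ _ ⟨b, rfl⟩ _ ⟨c, rfl⟩ _ ⟨d, rfl⟩ h
  simp only [Prod.mk_sub_mk, Prod.mk.injEq] at h ⊢
  obtain ⟨hψsub, hsub⟩ := h
  have hmul : ψ a * ψ d = ψ b * ψ c := by
    rw [← ψ.map_add_eq_mul, ← ψ.map_add_eq_mul, add_comm b, ← sub_eq_sub_iff_add_eq_add.mp hsub]
  -- Vieta: `ψ b` is a root of `(X - ψ a) * (X - ψ d)`
  have hroot : (ψ b - ψ a) * (ψ b - ψ d) = 0 := by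
    linear_combination (-ψ b) * hψsub + hmul
  rcases mul_eq_zero.mp hroot with hba | hbd
  · obtain rfl := hψ (sub_eq_zero.mp hba)
    have hcd : c = d := eq_of_sub_eq_zero (by rw [← hsub, sub_self])
    exact Or.inl ⟨⟨rfl, rfl⟩, congr_arg ψ hcd, hcd⟩
  · obtain rfl := hψ (sub_eq_zero.mp hbd)
    have hac : a = c := sub_left_injective hsub
    exact Or.inr ⟨⟨congr_arg ψ hac, hac⟩, rfl, rfl⟩

theorem IsPrimitiveRoot.zmodChar_injective {M : Type*} [CommMonoid M] {n : ℕ} [NeZero n] {ζ : M}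
    (hζ : IsPrimitiveRoot ζ n) : Function.Injective (AddChar.zmodChar n hζ.pow_eq_one) :=
  fun a b h => ZMod.val_injective n
    (hζ.pow_inj a.val_lt b.val_lt (by simpa only [AddChar.zmodChar_apply] using h))

theorem ZMod.exists_isPrimitiveRoot_sub_one (p : ℕ) [Fact p.Prime] :
    ∃ ζ : ZMod p, IsPrimitiveRoot ζ (p - 1) := by
  obtain ⟨g, hg⟩ := IsCyclic.exists_ofOrder_eq_natCard (α := (ZMod p)ˣ)
  refine ⟨g, IsPrimitiveRoot.iff_orderOf.mpr ?_⟩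
  rw [orderOf_units, hg, Nat.card_eq_fintype_card, ZMod.card_units]

theorem exists_isSidon_zmod_mul_sub_one (p : ℕ) [Fact p.Prime] :
    ∃ S : Finset (ZMod (p * (p - 1))), IsSidon (S : Set (ZMod (p * (p - 1)))) ∧ S.card = p - 1 ∧
      ∀ r : ZMod (p - 1), ∃ s ∈ S, ZMod.castHom (dvd_mul_left _ _) _ s = r := by
  have hp : p.Prime := Fact.out
  have : NeZero (p - 1) := ⟨by have := hp.two_le; omega⟩
  obtain ⟨ζ, hζ⟩ := ZMod.exists_isPrimitiveRoot_sub_one p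
  set ψ := AddChar.zmodChar (p - 1) hζ.pow_eq_one
  set e := ZMod.chineseRemainder
    ((Nat.coprime_self_sub_right hp.one_le).mpr (Nat.coprime_one_right p))
  have he : ∀ x, (e x).2 = ZMod.castHom (dvd_mul_left _ _) _ x := fun x =>
    congr($(RingHom.ext_zmod ((RingHom.snd _ _).comp e.toRingHom) (ZMod.castHom _ _)) x)
  set u : ZMod (p - 1) → ZMod (p * (p - 1)) := fun i => e.symm (ψ i, i)
  have hu : Function.Injective u := fun i j h => congr_arg Prod.snd (e.symm.injective h)
  refine ⟨Finset.univ.image u, ?_, ?_,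
    fun r => ⟨u r, Finset.mem_image_of_mem _ (Finset.mem_univ r), ?_⟩⟩
  · refine (AddChar.isSidon_range_graph hζ.zmodChar_injective).of_mapsTo e.toAddEquiv.toAddMonoidHom
      e.injective.injOn ?_
    intro x hx
    obtain ⟨i, -, rfl⟩ := Finset.mem_image.mp hx
    exact ⟨i, (e.apply_symm_apply _).symm⟩
  · rw [Finset.card_image_of_injective _ hu, Finset.card_univ, ZMod.card]
  · rw [← he, e.apply_symm_apply]

theorem ZMod.exists_val_add_le {n : ℕ} [NeZero n] (S : Finset (ZMod n)) (L : ℕ)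
    (h : S.card * (n - 1 - L) < n) : ∃ t : ZMod n, ∀ s ∈ S, (t + s).val ≤ L := by
  have hbad : ∀ s : ZMod n,
      (Finset.univ.filter fun t : ZMod n => L < (t + s).val).card ≤ n - 1 - L := by
    intro s
    calc _ ≤ (Finset.Ioo L n).card :=
          Finset.card_le_card_of_injOn (fun t => (t + s).val)
            (fun t ht => Finset.mem_Ioo.mpr ⟨(Finset.mem_filter.mp ht).2, ZMod.val_lt _⟩)
            (fun a _ b _ hab => add_right_cancel (ZMod.val_injective n hab))
      _ = n - 1 - L := by rw [Nat.card_Ioo]; omega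
  by_contra! hnone
  have hcover : (Finset.univ : Finset (ZMod n)) ⊆
      S.biUnion fun s => Finset.univ.filter fun t : ZMod n => L < (t + s).val := by
    intro t _
    obtain ⟨s, hs, hts⟩ := hnone t
    exact Finset.mem_biUnion.mpr ⟨s, hs, Finset.mem_filter.mpr ⟨Finset.mem_univ t, hts⟩⟩
  have := calc n = (Finset.univ : Finset (ZMod n)).card := (ZMod.card n).symm
    _ ≤ _ := Finset.card_le_card hcover
    _ ≤ ∑ s ∈ S, (Finset.univ.filter fun t : ZMod n => L < (t + s).val).card :=
      Finset.card_biUnion_le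
    _ ≤ S.card * (n - 1 - L) := Finset.sum_le_card_nsmul _ _ _ fun s _ => hbad s
  omega

theorem exists_hasLength_le {X : Finset ℤ} (hX : X.Nonempty) {a b : ℤ}
    (hab : ∀ x ∈ X, a ≤ x ∧ x ≤ b) : ∃ L : ℕ, (L : ℤ) ≤ b - a ∧ HasLength X L := by
  have hmin := (hab _ (X.min'_mem hX)).1
  have hmax := (hab _ (X.max'_mem hX)).2
  have hle := X.min'_le _ (X.max'_mem hX)
  exact ⟨(X.max' hX - X.min' hX).toNat, by omega, X.min' hX, X.min'_mem hX, X.max' hX,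
    X.max'_mem hX, fun x hx => ⟨X.min'_le x hx, X.le_max' x hx⟩, by omega⟩

theorem IsSidon.isGolombRuler_image_val {n : ℕ} [NeZero n] {S : Finset (ZMod n)}
    (hS : IsSidon (S : Set (ZMod n))) : IsGolombRuler (S.image fun s => (s.val : ℤ)) := by
  have hcast : ∀ s : ZMod n, ((s.val : ℤ) : ZMod n) = s := fun s => by simp
  refine isGolombRuler_iff_isSidon.mpr (hS.of_mapsTo (Int.castAddHom (ZMod n)) ?_ ?_)
  · intro x hx y hy hxy
    obtain ⟨s, -, rfl⟩ := Finset.mem_image.mp hx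
    obtain ⟨s', -, rfl⟩ := Finset.mem_image.mp hy
    simp only [Int.coe_castAddHom, hcast] at hxy
    rw [hxy]
  · intro x hx
    obtain ⟨s, hs, rfl⟩ := Finset.mem_image.mp hx
    simpa only [Int.coe_castAddHom, hcast, Finset.mem_coe] using hs

theorem exists_isRGR_of_isSidon_zmod {n k L : ℕ} [NeZero n] (hk : k ∣ n) {S : Finset (ZMod n)}
    (hS : IsSidon (S : Set (ZMod n))) (hcard : S.card = k)
    (hres : ∀ r : ZMod k, ∃ s ∈ S, ZMod.castHom hk (ZMod k) s = r)
    (hL : k * (n - 1 - L) < n) : ∃ L' ≤ L, ∃ X : Finset ℤ, IsRGR k L' X := by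
  obtain ⟨t, ht⟩ := ZMod.exists_val_add_le S L (hcard ▸ hL)
  set X := (t +ᵥ S).image fun s => (s.val : ℤ)
  have hX : CoversResidues k X := by
    intro r
    obtain ⟨s, hs, hsr⟩ := hres (r - ZMod.castHom hk (ZMod k) t)
    refine ⟨((t + s).val : ℤ), Finset.mem_image_of_mem _ (Finset.vadd_mem_vadd_finset hs), ?_⟩
    rw [Int.cast_natCast, ← ZMod.cast_eq_val, ← ZMod.castHom_apply (h := hk), map_add, hsr,
      add_sub_cancel]
  have hbounds : ∀ x ∈ X, 0 ≤ x ∧ x ≤ L := by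
    intro x hx
    obtain ⟨_, hy, rfl⟩ := Finset.mem_image.mp hx
    obtain ⟨s, hs, rfl⟩ := Finset.mem_vadd_finset.mp hy
    exact ⟨Int.natCast_nonneg _, Int.ofNat_le.mpr (ht s hs)⟩
  obtain ⟨L', hL', hlen⟩ := exists_hasLength_le ⟨_, (hX 0).choose_spec.1⟩ hbounds
  refine ⟨L', by omega, X, ?_, ?_, hlen, hX⟩
  · rw [Finset.card_image_of_injective _ fun a b h => ZMod.val_injective n (by exact_mod_cast h),
      Finset.card_vadd_finset, hcard]
  · exact IsSidon.isGolombRuler_image_val (by rw [Finset.coe_vadd_finset]; exact hS.vadd t)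

theorem rgr_from_ruzsa_general (p : ℕ) (hp : p.Prime) :
    ∃ L ≤ p ^ 2 - 2 * p, ∃ X : Finset ℤ, IsRGR (p - 1) L X := by
  have : Fact p.Prime := ⟨hp⟩
  have hp2 := hp.two_le
  have : NeZero (p * (p - 1)) := ⟨Nat.mul_ne_zero hp.ne_zero (by omega)⟩
  obtain ⟨S, hS, hcard, hres⟩ := exists_isSidon_zmod_mul_sub_one p
  have hn : p * (p - 1) = p ^ 2 - p := by rw [Nat.mul_sub_one, sq]
  have hpn : p ≤ p * (p - 1) := Nat.le_mul_of_pos_right p (by omega)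
  have hL : (p - 1) * (p * (p - 1) - 1 - (p * (p - 1) - p)) < p * (p - 1) := by
    rw [show p * (p - 1) - 1 - (p * (p - 1) - p) = p - 1 by omega]
    exact Nat.mul_lt_mul_of_pos_right (by omega) (by omega)
  obtain ⟨L, hL, X, hX⟩ := exists_isRGR_of_isSidon_zmod _ hS hcard hres hL
  exact ⟨L, by omega, X, hX⟩

/-- For every prime p ≥ 3, there exists a resolvable Golomb ruler of order p−1
whose length is at most p² − 2p. -/
theorem rgr_from_ruzsa (p : ℕ) (hp : p.Prime) (hp3 : 3 ≤ p) :
    ∃ L ≤ p ^ 2 - 2 * p, ∃ X : Finset ℤ, IsRGR (p - 1) L X :=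
  rgr_from_ruzsa_general p hp
end

section
/- If there exists a Costas permutation of order n ≥ 2, then there exists a resolvable Golomb ruler of order n whose length is at most 2n² − n − 1. (Explicitly, if f is a Costas permutation of {1,…,n}, then the set {(i−1)·2n + f(i) : 1 ≤ i ≤ n} is such a ruler.) -/
def IsCostasPermutation (n : ℕ) (f : ℕ → ℕ) : Prop :=
  Set.BijOn f (Set.Icc 1 n) (Set.Icc 1 n) ∧
  ∀ i j k : ℕ, i ∈ Set.Icc 1 n → j ∈ Set.Icc 1 n →
    i + k ∈ Set.Icc 1 n → j + k ∈ Set.Icc 1 n →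
    (f (i + k) : ℤ) - (f i : ℤ) = (f (j + k) : ℤ) - (f j : ℤ) →
    i = j ∨ k = 0

set_option maxHeartbeats 1000000 in
/-- If there exists a Costas permutation of order n ≥ 2, then the set
`{(i−1)·2n + f(i) : 1 ≤ i ≤ n}` is a resolvable Golomb ruler of order n
whose length is at most 2n² − n − 1. -/
theorem rgr_from_costas (n : ℕ) (hn : 2 ≤ n) (f : ℕ → ℕ)
    (hf : IsCostasPermutation n f) :
    ∃ L ≤ 2 * n ^ 2 - n - 1,
      IsRGR n L ((Finset.Icc 1 n).image
        (fun i : ℕ => ((i : ℤ) - 1) * (2 * (n : ℤ)) + (f i : ℤ))) := by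
  obtain ⟨⟨hmaps, hinj, hsurj⟩, hcostas⟩ := hf
  set g : ℕ → ℤ := fun i => ((i : ℤ) - 1) * (2 * (n : ℤ)) + (f i : ℤ) with hgdef
  have hfb : ∀ i, 1 ≤ i → i ≤ n → 1 ≤ f i ∧ f i ≤ n := by
    intro i h1 h2
    exact hmaps ⟨h1, h2⟩
  set X := (Finset.Icc 1 n).image g with hX
  have hmem : ∀ x, x ∈ X ↔ ∃ i, (1 ≤ i ∧ i ≤ n) ∧ g i = x := by
    intro x
    simp [hX, Finset.mem_image, Finset.mem_Icc]
  -- key: a difference equation forces component-wise equality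
  have hkey : ∀ a b c d : ℕ, 1 ≤ a → a ≤ n → 1 ≤ b → b ≤ n → 1 ≤ c → c ≤ n →
      1 ≤ d → d ≤ n → g a - g b = g c - g d →
      ((a : ℤ) - b = (c : ℤ) - d) ∧ ((f a : ℤ) - f b = (f c : ℤ) - f d) := by
    intro a b c d ha1 ha2 hb1 hb2 hc1 hc2 hd1 hd2 heq
    obtain ⟨hfa1, hfa2⟩ := hfb a ha1 ha2
    obtain ⟨hfb1, hfb2⟩ := hfb b hb1 hb2
    obtain ⟨hfc1, hfc2⟩ := hfb c hc1 hc2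
    obtain ⟨hfd1, hfd2⟩ := hfb d hd1 hd2
    have hfa1' : (1:ℤ) ≤ f a := by exact_mod_cast hfa1
    have hfa2' : (f a:ℤ) ≤ n := by exact_mod_cast hfa2
    have hfb1' : (1:ℤ) ≤ f b := by exact_mod_cast hfb1
    have hfb2' : (f b:ℤ) ≤ n := by exact_mod_cast hfb2
    have hfc1' : (1:ℤ) ≤ f c := by exact_mod_cast hfc1
    have hfc2' : (f c:ℤ) ≤ n := by exact_mod_cast hfc2
    have hfd1' : (1:ℤ) ≤ f d := by exact_mod_cast hfd1
    have hfd2' : (f d:ℤ) ≤ n := by exact_mod_cast hfd2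
    have hn' : (2:ℤ) ≤ n := by exact_mod_cast hn
    have heq' : (((a:ℤ) - b) - ((c:ℤ) - d)) * (2 * n)
        = ((f c : ℤ) - f d) - ((f a : ℤ) - f b) := by
      simp only [hgdef] at heq
      ring_nf at heq ⊢
      linarith
    set D : ℤ := ((a:ℤ) - b) - ((c:ℤ) - d) with hD
    have hD0 : D = 0 := by
      rcases lt_trichotomy D 0 with h | h | h
      · exfalso
        have : D ≤ -1 := by omega
        nlinarith
      · exact h
      · exfalso
        have : 1 ≤ D := by omega
        nlinarith
    constructor
    · linarith [hD0]
    · rw [hD0] at heq'; linarith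
  have hginj : ∀ a b : ℕ, 1 ≤ a → a ≤ n → 1 ≤ b → b ≤ n → g a = g b → a = b := by
    intro a b ha1 ha2 hb1 hb2 h
    have := hkey a b a a ha1 ha2 hb1 hb2 ha1 ha2 ha1 ha2 (by rw [h])
    omega
  -- card
  have hcard : X.card = n := by
    rw [hX, Finset.card_image_of_injOn, Nat.card_Icc]
    · omega
    · intro a ha b hb h
      simp only [Finset.coe_Icc, Set.mem_Icc] at ha hb
      exact hginj a b ha.1 ha.2 hb.1 hb.2 h
  -- golomb
  have hgolomb : IsGolombRuler X := by
    intro x hx y hy z hz w hw heq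
    obtain ⟨a, ⟨ha1, ha2⟩, rfl⟩ := (hmem x).1 hx
    obtain ⟨b, ⟨hb1, hb2⟩, rfl⟩ := (hmem y).1 hy
    obtain ⟨c, ⟨hc1, hc2⟩, rfl⟩ := (hmem z).1 hz
    obtain ⟨d, ⟨hd1, hd2⟩, rfl⟩ := (hmem w).1 hw
    obtain ⟨h1, h2⟩ := hkey a b c d ha1 ha2 hb1 hb2 hc1 hc2 hd1 hd2 heq
    have hidx : (a = b ∧ c = d) ∨ (a = c ∧ b = d) := by
      rcases le_or_gt b a with hba | hba
      · have hk : b + (a - b) = a := by omega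
        have hk2 : d + (a - b) = c := by omega
        have := hcostas b d (a - b) (Set.mem_Icc.2 ⟨hb1, hb2⟩) (Set.mem_Icc.2 ⟨hd1, hd2⟩)
          (by rw [hk]; exact Set.mem_Icc.2 ⟨ha1, ha2⟩) (by rw [hk2]; exact Set.mem_Icc.2 ⟨hc1, hc2⟩)
          (by rw [hk, hk2]; exact h2)
        omega
      · have hk : a + (b - a) = b := by omega
        have hk2 : c + (b - a) = d := by omega
        have := hcostas a c (b - a) (Set.mem_Icc.2 ⟨ha1, ha2⟩) (Set.mem_Icc.2 ⟨hc1, hc2⟩)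
          (by rw [hk]; exact Set.mem_Icc.2 ⟨hb1, hb2⟩) (by rw [hk2]; exact Set.mem_Icc.2 ⟨hd1, hd2⟩)
          (by rw [hk, hk2]; linarith [h2])
        omega
    rcases hidx with ⟨rfl, rfl⟩ | ⟨rfl, rfl⟩
    · left; exact ⟨rfl, rfl⟩
    · right; exact ⟨rfl, rfl⟩
  -- length
  have h1n : 1 ≤ n := by omega
  have hg1 : g 1 ∈ X := (hmem _).2 ⟨1, ⟨le_refl 1, h1n⟩, rfl⟩
  have hgn : g n ∈ X := (hmem _).2 ⟨n, ⟨h1n, le_refl n⟩, rfl⟩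
  have hbounds : ∀ x ∈ X, g 1 ≤ x ∧ x ≤ g n := by
    intro x hx
    obtain ⟨i, ⟨hi1, hi2⟩, rfl⟩ := (hmem x).1 hx
    obtain ⟨hfi1, hfi2⟩ := hfb i hi1 hi2
    obtain ⟨hf11, hf12⟩ := hfb 1 le_rfl h1n
    obtain ⟨hfn1, hfn2⟩ := hfb n h1n le_rfl
    have hfi1' : (1:ℤ) ≤ f i := by exact_mod_cast hfi1
    have hfi2' : (f i:ℤ) ≤ n := by exact_mod_cast hfi2
    have hf11' : (1:ℤ) ≤ f 1 := by exact_mod_cast hf11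
    have hf12' : (f 1:ℤ) ≤ n := by exact_mod_cast hf12
    have hfn1' : (1:ℤ) ≤ f n := by exact_mod_cast hfn1
    have hfn2' : (f n:ℤ) ≤ n := by exact_mod_cast hfn2
    have hi1' : (1:ℤ) ≤ i := by exact_mod_cast hi1
    have hi2' : (i:ℤ) ≤ n := by exact_mod_cast hi2
    have hn' : (2:ℤ) ≤ n := by exact_mod_cast hn
    constructor
    · rcases Nat.eq_or_lt_of_le hi1 with h | h
      · rw [← h]
      · simp only [hgdef]
        push_cast
        have h2i : (2:ℤ) ≤ i := by exact_mod_cast h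
        have hm : (1:ℤ) * (2 * n) ≤ ((i:ℤ) - 1) * (2 * n) :=
          mul_le_mul_of_nonneg_right (by linarith) (by linarith)
        linarith
    · rcases Nat.eq_or_lt_of_le hi2 with h | h
      · rw [h]
      · simp only [hgdef]
        have h2i : (i:ℤ) ≤ (n:ℤ) - 1 := by
          have : (i:ℤ) < n := by exact_mod_cast h
          omega
        have hm : (1:ℤ) * (2 * n) ≤ ((n:ℤ) - i) * (2 * n) :=
          mul_le_mul_of_nonneg_right (by linarith) (by linarith)
        linarith
  have hfn1 := (hfb n h1n le_rfl).1
  have hfn2 := (hfb n h1n le_rfl).2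
  have hf11 := (hfb 1 le_rfl h1n).1
  have hf12 := (hfb 1 le_rfl h1n).2
  have hlen_nonneg : 0 ≤ g n - g 1 := by linarith [(hbounds (g n) hgn).1]
  set L : ℕ := (g n - g 1).toNat with hLdef
  have hLcast : (L : ℤ) = g n - g 1 := Int.toNat_of_nonneg hlen_nonneg
  have hLbound : L ≤ 2 * n ^ 2 - n - 1 := by
    have hgn1 : g n - g 1 = ((n:ℤ) - 1) * (2 * n) + f n - f 1 := by
      simp only [hgdef]; ring
    have h1 : (L : ℤ) ≤ 2 * (n:ℤ)^2 - n - 1 := by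
      rw [hLcast, hgn1]
      have : (f n : ℤ) ≤ n := by exact_mod_cast hfn2
      have : (1:ℤ) ≤ f 1 := by exact_mod_cast hf11
      have hn' : (2:ℤ) ≤ n := by exact_mod_cast hn
      nlinarith
    have h2 : ((n^2 : ℕ) : ℤ) = (n:ℤ)^2 := by push_cast; ring
    rw [← h2] at h1
    have h3 : n ≤ n ^ 2 := Nat.le_self_pow (by norm_num) n
    omega
  refine ⟨L, hLbound, hcard, hgolomb, ⟨g 1, hg1, g n, hgn, hbounds, by omega⟩, ?_⟩
  -- covers residues
  intro r
  haveI : NeZero n := ⟨by omega⟩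
  have hrval : r.val < n := ZMod.val_lt r
  set t : ℕ := if r.val = 0 then n else r.val with ht
  have ht1 : 1 ≤ t ∧ t ≤ n := by
    rw [ht]; split_ifs with h <;> omega
  obtain ⟨i, hi, hfi⟩ := hsurj (Set.mem_Icc.2 ht1)
  obtain ⟨hi1, hi2⟩ := Set.mem_Icc.1 hi
  refine ⟨g i, (hmem _).2 ⟨i, ⟨hi1, hi2⟩, rfl⟩, ?_⟩
  have hcast : ((g i : ℤ) : ZMod n) = ((f i : ℕ) : ZMod n) := by
    simp only [hgdef]
    push_cast
    simp [ZMod.natCast_self]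
  rw [hcast, hfi]
  have hrr : ((r.val : ℕ) : ZMod n) = r := ZMod.natCast_rightInverse r
  rw [ht]; split_ifs with h
  · simp only [ZMod.natCast_self]
    rw [← hrr, h]; simp
  · exact hrr
end

section
/- For each k ∈ {3,4,5} and each positive integer v divisible by k, a resolvable (v,k)-configuration exists if and only if v ≥ k². -/
/-- A symmetric (v,k)-configuration on the point set `Fin v`: `v` blocks of size `k`,
no pair of distinct points in more than one block, every point in exactly `k` blocks. -/
def IsConfig (v k : ℕ) (B : Finset (Finset (Fin v))) : Prop :=
  B.card = v ∧
  (∀ b ∈ B, b.card = k) ∧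
  (∀ b₁ ∈ B, ∀ b₂ ∈ B, ∀ x y : Fin v,
    x ≠ y → x ∈ b₁ → y ∈ b₁ → x ∈ b₂ → y ∈ b₂ → b₁ = b₂) ∧
  (∀ x : Fin v, (B.filter (fun b => x ∈ b)).card = k)

/-- A parallel class: a set of pairwise disjoint blocks whose union is the point set. -/
def IsParallelClass (v : ℕ) (P : Finset (Finset (Fin v))) : Prop :=
  (∀ x : Fin v, ∃ b ∈ P, x ∈ b) ∧
  (∀ b₁ ∈ P, ∀ b₂ ∈ P, b₁ ≠ b₂ → Disjoint b₁ b₂)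

/-- A resolution of the block set `B` into `r` parallel classes. -/
def IsResolution (v r : ℕ) (B : Finset (Finset (Fin v)))
    (R : Finset (Finset (Finset (Fin v)))) : Prop :=
  R.card = r ∧
  (∀ P ∈ R, P ⊆ B ∧ IsParallelClass v P) ∧
  (∀ b ∈ B, ∃! P, P ∈ R ∧ b ∈ P)

/-- A resolvable symmetric (v,k)-configuration exists. -/
def ExistsResolvableConfig (v k : ℕ) : Prop :=
  ∃ (B : Finset (Finset (Fin v))) (R : Finset (Finset (Finset (Fin v)))),
    IsConfig v k B ∧ IsResolution v k B R

def GoodCode (k m : ℕ) (C : Fin k → Fin m → Fin k → Fin m) : Prop :=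
  (∀ c : Fin k, ∀ j j' : Fin m, j ≠ j' → ∀ g : Fin k, C c j g ≠ C c j' g) ∧
  (∀ c c' : Fin k, c ≠ c' → ∀ j j' : Fin m, ∀ g g' : Fin k, g ≠ g' →
    C c j g = C c' j' g → C c j g' ≠ C c' j' g')

def codeSum {k m1 m2 : ℕ} (C1 : Fin k → Fin m1 → Fin k → Fin m1)
    (C2 : Fin k → Fin m2 → Fin k → Fin m2) :
    Fin k → Fin (m1 + m2) → Fin k → Fin (m1 + m2) :=
  fun c j g =>
    if h : (j : ℕ) < m1 then Fin.castAdd m2 (C1 c ⟨j, h⟩ g)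
    else Fin.natAdd m1 (C2 c ⟨(j : ℕ) - m1, by have := j.isLt; omega⟩ g)

lemma goodCodeSum {k m1 m2 : ℕ} {C1 : Fin k → Fin m1 → Fin k → Fin m1}
    {C2 : Fin k → Fin m2 → Fin k → Fin m2}
    (h1 : GoodCode k m1 C1) (h2 : GoodCode k m2 C2) :
    GoodCode k (m1 + m2) (codeSum C1 C2) := by
  have injN : ∀ x y : Fin m2, Fin.natAdd m1 x = Fin.natAdd m1 y → x = y := by
    intro x y h
    have := congrArg Fin.val h
    simp only [Fin.coe_natAdd] at this
    exact Fin.ext (by omega)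
  have injC : ∀ x y : Fin m1, Fin.castAdd m2 x = Fin.castAdd m2 y → x = y := by
    intro x y h
    have := congrArg Fin.val h
    simp only [Fin.coe_castAdd] at this
    exact Fin.ext this
  have mixed : ∀ (x : Fin m1) (y : Fin m2), Fin.castAdd m2 x ≠ Fin.natAdd m1 y := by
    intro x y h
    have := congrArg Fin.val h
    simp only [Fin.coe_castAdd, Fin.coe_natAdd] at this
    have := x.isLt; omega
  constructor
  · intro c j j' hne g heq
    have hvne : (j : ℕ) ≠ (j' : ℕ) := fun h => hne (Fin.ext h)
    unfold codeSum at heq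
    by_cases ha : (j : ℕ) < m1 <;> by_cases hb : (j' : ℕ) < m1
    · rw [dif_pos ha, dif_pos hb] at heq
      refine h1.1 c ⟨j, ha⟩ ⟨j', hb⟩ ?_ g (injC _ _ heq)
      intro h
      exact hvne (by simpa using congrArg Fin.val h)
    · rw [dif_pos ha, dif_neg hb] at heq
      exact mixed _ _ heq
    · rw [dif_neg ha, dif_pos hb] at heq
      exact mixed _ _ heq.symm
    · rw [dif_neg ha, dif_neg hb] at heq
      refine h2.1 c _ _ ?_ g (injN _ _ heq)
      intro h
      have hh := congrArg Fin.val h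
      simp only [] at hh
      have := j.isLt; have := j'.isLt
      exact hvne (by omega)
  · intro c c' hcc j j' g g' hgg heq heq'
    unfold codeSum at heq heq'
    by_cases ha : (j : ℕ) < m1 <;> by_cases hb : (j' : ℕ) < m1
    · rw [dif_pos ha, dif_pos hb] at heq heq'
      exact h1.2 c c' hcc ⟨j, ha⟩ ⟨j', hb⟩ g g' hgg (injC _ _ heq) (injC _ _ heq')
    · rw [dif_pos ha, dif_neg hb] at heq
      exact mixed _ _ heq
    · rw [dif_neg ha, dif_pos hb] at heq
      exact mixed _ _ heq.symm
    · rw [dif_neg ha, dif_neg hb] at heq heq'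
      exact h2.2 c c' hcc _ _ g g' hgg (injN _ _ heq) (injN _ _ heq')

def tblGet (t : List (List (List ℕ))) (c j g : ℕ) : ℕ := ((t.getD c []).getD j []).getD g 0

def mkCode (k m : ℕ) (hm : 0 < m) (t : List (List (List ℕ))) :
    Fin k → Fin m → Fin k → Fin m :=
  fun c j g => ⟨tblGet t c j g % m, Nat.mod_lt _ hm⟩

def checkTbl (k m : ℕ) (t : List (List (List ℕ))) : Bool :=
  ((List.range k).all fun c =>
    (List.range m).all fun j => (List.range m).all fun j' =>
      decide (j = j') || (List.range k).all fun g =>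
        decide (tblGet t c j g % m ≠ tblGet t c j' g % m)) &&
  ((List.range k).all fun c => (List.range k).all fun c' =>
    decide (c = c') ||
    ((List.range m).all fun j => (List.range m).all fun j' =>
      (List.range k).all fun g => (List.range k).all fun g' =>
        decide (g = g') || decide (tblGet t c j g % m ≠ tblGet t c' j' g % m) ||
        decide (tblGet t c j g' % m ≠ tblGet t c' j' g' % m)))

lemma goodCode_of_check (k m : ℕ) (hm : 0 < m) (t : List (List (List ℕ)))
    (h : checkTbl k m t = true) : GoodCode k m (mkCode k m hm t) := by
  unfold checkTbl at h
  rw [Bool.and_eq_true] at h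
  obtain ⟨h1, h2⟩ := h
  simp only [List.all_eq_true, List.mem_range, Bool.or_eq_true, decide_eq_true_eq] at h1 h2
  constructor
  · intro c j j' hne g heq
    have := h1 c c.isLt j j.isLt j' j'.isLt
    rcases this with hjj | hall
    · exact hne (Fin.ext hjj)
    · have := hall g g.isLt
      exact this (by simpa [mkCode, Fin.ext_iff] using heq)
  · intro c c' hcc j j' g g' hgg heq heq'
    have := h2 c c.isLt c' c'.isLt
    rcases this with hc | hall
    · exact hcc (Fin.ext hc)
    · have := hall j j.isLt j' j'.isLt g g.isLt g' g'.isLt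
      rcases this with (hg | hne1) | hne2
      · exact hgg (Fin.ext hg)
      · exact hne1 (by simpa [mkCode, Fin.ext_iff] using heq)
      · exact hne2 (by simpa [mkCode, Fin.ext_iff] using heq')

def tbl33 : List (List (List Nat)) := [[[0, 0, 0], [1, 1, 1], [2, 2, 2]], [[0, 1, 2], [1, 2, 0], [2, 0, 1]], [[0, 2, 1], [1, 0, 2], [2, 1, 0]]]
def tbl34 : List (List (List Nat)) := [[[0, 0, 0], [1, 1, 1], [2, 2, 2], [3, 3, 3]], [[0, 1, 2], [1, 0, 3], [2, 3, 0], [3, 2, 1]], [[0, 2, 3], [1, 3, 2], [2, 0, 1], [3, 1, 0]]]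
def tbl35 : List (List (List Nat)) := [[[0, 0, 0], [1, 1, 1], [2, 2, 2], [3, 3, 3], [4, 4, 4]], [[0, 1, 2], [1, 0, 3], [2, 3, 4], [3, 4, 0], [4, 2, 1]], [[0, 2, 3], [1, 3, 0], [2, 4, 1], [3, 1, 4], [4, 0, 2]]]
def tbl44 : List (List (List Nat)) := [[[0, 0, 0, 0], [1, 1, 1, 1], [2, 2, 2, 2], [3, 3, 3, 3]], [[0, 1, 2, 3], [1, 0, 3, 2], [2, 3, 0, 1], [3, 2, 1, 0]], [[0, 2, 3, 1], [1, 3, 2, 0], [2, 0, 1, 3], [3, 1, 0, 2]], [[0, 3, 1, 2], [1, 2, 0, 3], [2, 1, 3, 0], [3, 0, 2, 1]]]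
def tbl45 : List (List (List Nat)) := [[[0, 0, 0, 0], [1, 1, 1, 1], [2, 2, 2, 2], [3, 3, 3, 3], [4, 4, 4, 4]], [[0, 1, 2, 3], [1, 2, 3, 4], [2, 3, 4, 0], [3, 4, 0, 1], [4, 0, 1, 2]], [[0, 2, 4, 1], [1, 3, 0, 2], [2, 4, 1, 3], [3, 0, 2, 4], [4, 1, 3, 0]], [[0, 3, 1, 4], [1, 4, 2, 0], [2, 0, 3, 1], [3, 1, 4, 2], [4, 2, 0, 3]]]
def tbl46 : List (List (List Nat)) := [[[0, 0, 0, 0], [1, 1, 1, 1], [2, 2, 2, 2], [3, 3, 3, 3], [4, 4, 4, 4], [5, 5, 5, 5]], [[0, 1, 2, 3], [1, 0, 3, 2], [2, 3, 4, 5], [3, 2, 5, 4], [4, 5, 0, 1], [5, 4, 1, 0]], [[0, 2, 1, 5], [1, 3, 0, 4], [2, 4, 3, 1], [3, 5, 2, 0], [4, 0, 5, 3], [5, 1, 4, 2]], [[0, 3, 5, 1], [1, 2, 4, 0], [2, 5, 1, 3], [3, 4, 0, 2], [4, 1, 3, 5], [5, 0, 2, 4]]]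
def tbl47 : List (List (List Nat)) := [[[0, 0, 0, 0], [1, 1, 1, 1], [2, 2, 2, 2], [3, 3, 3, 3], [4, 4, 4, 4], [5, 5, 5, 5], [6, 6, 6, 6]], [[0, 1, 2, 3], [1, 0, 3, 2], [2, 3, 0, 1], [3, 4, 5, 6], [4, 2, 6, 5], [5, 6, 1, 4], [6, 5, 4, 0]], [[0, 2, 1, 6], [1, 3, 2, 0], [2, 0, 4, 3], [3, 5, 0, 4], [4, 6, 5, 1], [5, 1, 6, 2], [6, 4, 3, 5]], [[0, 3, 4, 2], [1, 5, 6, 3], [2, 4, 1, 0], [3, 6, 2, 5], [4, 1, 0, 6], [5, 2, 3, 1], [6, 0, 5, 4]]]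
def tbl55 : List (List (List Nat)) := [[[0, 0, 0, 0, 0], [1, 1, 1, 1, 1], [2, 2, 2, 2, 2], [3, 3, 3, 3, 3], [4, 4, 4, 4, 4]], [[0, 1, 2, 3, 4], [1, 2, 3, 4, 0], [2, 3, 4, 0, 1], [3, 4, 0, 1, 2], [4, 0, 1, 2, 3]], [[0, 2, 4, 1, 3], [1, 3, 0, 2, 4], [2, 4, 1, 3, 0], [3, 0, 2, 4, 1], [4, 1, 3, 0, 2]], [[0, 3, 1, 4, 2], [1, 4, 2, 0, 3], [2, 0, 3, 1, 4], [3, 1, 4, 2, 0], [4, 2, 0, 3, 1]], [[0, 4, 3, 2, 1], [1, 0, 4, 3, 2], [2, 1, 0, 4, 3], [3, 2, 1, 0, 4], [4, 3, 2, 1, 0]]]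
def tbl56 : List (List (List Nat)) := [[[0, 0, 0, 0, 0], [1, 1, 1, 1, 1], [2, 2, 2, 2, 2], [3, 3, 3, 3, 3], [4, 4, 4, 4, 4], [5, 5, 5, 5, 5]], [[0, 1, 2, 3, 4], [1, 0, 3, 2, 5], [2, 3, 4, 5, 0], [3, 2, 5, 4, 1], [4, 5, 0, 1, 2], [5, 4, 1, 0, 3]], [[0, 2, 4, 1, 3], [1, 3, 5, 0, 2], [2, 4, 0, 3, 5], [3, 5, 1, 2, 4], [4, 0, 2, 5, 1], [5, 1, 3, 4, 0]], [[0, 3, 1, 4, 5], [1, 2, 0, 5, 4], [2, 5, 3, 0, 1], [3, 4, 2, 1, 0], [4, 1, 5, 2, 3], [5, 0, 4, 3, 2]], [[0, 4, 3, 5, 2], [1, 5, 2, 4, 3], [2, 0, 5, 1, 4], [3, 1, 4, 0, 5], [4, 2, 1, 3, 0], [5, 3, 0, 2, 1]]]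
def tbl57 : List (List (List Nat)) := [[[0, 0, 0, 0, 0], [1, 1, 1, 1, 1], [2, 2, 2, 2, 2], [3, 3, 3, 3, 3], [4, 4, 4, 4, 4], [5, 5, 5, 5, 5], [6, 6, 6, 6, 6]], [[0, 1, 2, 3, 4], [1, 2, 3, 4, 5], [2, 3, 4, 5, 6], [3, 4, 5, 6, 0], [4, 5, 6, 0, 1], [5, 6, 0, 1, 2], [6, 0, 1, 2, 3]], [[0, 2, 4, 1, 3], [1, 3, 5, 2, 4], [2, 4, 6, 3, 5], [3, 5, 0, 4, 6], [4, 6, 1, 5, 0], [5, 0, 2, 6, 1], [6, 1, 3, 0, 2]], [[0, 3, 1, 4, 2], [1, 4, 2, 5, 3], [2, 5, 3, 6, 4], [3, 6, 4, 0, 5], [4, 0, 5, 1, 6], [5, 1, 6, 2, 0], [6, 2, 0, 3, 1]], [[0, 4, 3, 2, 1], [1, 5, 4, 3, 2], [2, 6, 5, 4, 3], [3, 0, 6, 5, 4], [4, 1, 0, 6, 5], [5, 2, 1, 0, 6], [6, 3, 2, 1, 0]]]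
def tbl58 : List (List (List Nat)) := [[[0, 0, 0, 0, 0], [1, 1, 1, 1, 1], [2, 2, 2, 2, 2], [3, 3, 3, 3, 3], [4, 4, 4, 4, 4], [5, 5, 5, 5, 5], [6, 6, 6, 6, 6], [7, 7, 7, 7, 7]], [[0, 1, 2, 3, 4], [1, 2, 3, 4, 5], [2, 3, 4, 5, 6], [3, 4, 5, 6, 7], [4, 5, 6, 7, 0], [5, 6, 7, 0, 1], [6, 7, 0, 1, 2], [7, 0, 1, 2, 3]], [[0, 2, 1, 5, 7], [1, 3, 2, 6, 0], [2, 4, 3, 7, 1], [3, 5, 4, 0, 2], [4, 6, 5, 1, 3], [5, 7, 6, 2, 4], [6, 0, 7, 3, 5], [7, 1, 0, 4, 6]], [[0, 3, 5, 2, 1], [1, 4, 6, 3, 2], [2, 5, 7, 4, 3], [3, 6, 0, 5, 4], [4, 7, 1, 6, 5], [5, 0, 2, 7, 6], [6, 1, 3, 0, 7], [7, 2, 4, 1, 0]], [[0, 4, 7, 1, 6], [1, 5, 0, 2, 7], [2, 6, 1, 3, 0], [3, 7, 2, 4, 1], [4, 0, 3, 5, 2], [5, 1, 4, 6, 3], [6,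 2, 5, 7, 4], [7, 3, 6, 0, 5]]]
def tbl59 : List (List (List Nat)) := [[[0, 0, 0, 0, 0], [1, 1, 1, 1, 1], [2, 2, 2, 2, 2], [3, 3, 3, 3, 3], [4, 4, 4, 4, 4], [5, 5, 5, 5, 5], [6, 6, 6, 6, 6], [7, 7, 7, 7, 7], [8, 8, 8, 8, 8]], [[0, 1, 2, 3, 4], [1, 2, 3, 4, 5], [2, 3, 4, 5, 6], [3, 4, 5, 6, 7], [4, 5, 6, 7, 8], [5, 6, 7, 8, 0], [6, 7, 8, 0, 1], [7, 8, 0, 1, 2], [8, 0, 1, 2, 3]], [[0, 2, 1, 5, 7], [1, 3, 2, 6, 8], [2, 4, 3, 7, 0], [3, 5, 4, 8, 1], [4, 6, 5, 0, 2], [5, 7, 6, 1, 3], [6, 8, 7, 2, 4], [7, 0, 8, 3, 5], [8, 1, 0, 4, 6]], [[0, 3, 5, 2, 1], [1, 4, 6, 3, 2], [2, 5, 7, 4, 3], [3, 6, 8, 5, 4], [4, 7, 0, 6, 5], [5, 8, 1, 7, 6], [6, 0, 2, 8, 7], [7, 1, 3, 0, 8], [8, 2, 4, 1, 0]], [[0,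 4, 7, 1, 5], [1, 5, 8, 2, 6], [2, 6, 0, 3, 7], [3, 7, 1, 4, 8], [4, 8, 2, 5, 0], [5, 0, 3, 6, 1], [6, 1, 4, 7, 2], [7, 2, 5, 8, 3], [8, 3, 6, 0, 4]]]

namespace RConf

def pt {m k : ℕ} (x : Fin m) (g : Fin k) : Fin (m * k) := finProdFinEquiv (x, g)

lemma pt_inj {m k : ℕ} {x y : Fin m} {g g' : Fin k} (h : pt x g = pt y g') :
    x = y ∧ g = g' := by
  have h2 : ((x, g) : Fin m × Fin k) = (y, g') := finProdFinEquiv.injective h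
  exact ⟨congrArg Prod.fst h2, congrArg Prod.snd h2⟩

lemma pt_surj {m k : ℕ} (z : Fin (m * k)) : ∃ x g, pt x g = z := by
  obtain ⟨⟨x, g⟩, hx⟩ := finProdFinEquiv.surjective z
  exact ⟨x, g, hx⟩

variable {k m : ℕ} (C : Fin k → Fin m → Fin k → Fin m)

def blk (c : Fin k) (j : Fin m) : Finset (Fin (m * k)) :=
  Finset.univ.image fun g => pt (C c j g) g

def Bset : Finset (Finset (Fin (m * k))) :=
  Finset.univ.image fun p : Fin k × Fin m => blk C p.1 p.2

def Pcls (c : Fin k) : Finset (Finset (Fin (m * k))) :=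
  Finset.univ.image fun j => blk C c j

def Rset : Finset (Finset (Finset (Fin (m * k)))) :=
  Finset.univ.image fun c => Pcls C c

variable {C}

lemma mem_blk {c : Fin k} {j : Fin m} {z : Fin (m * k)} :
    z ∈ blk C c j ↔ ∃ g, pt (C c j g) g = z := by
  simp [blk]

lemma mem_Bset {b : Finset (Fin (m * k))} :
    b ∈ Bset C ↔ ∃ c j, blk C c j = b := by
  simp [Bset]

lemma mem_Pcls {c : Fin k} {b : Finset (Fin (m * k))} :
    b ∈ Pcls C c ↔ ∃ j, blk C c j = b := by
  simp [Pcls]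

lemma mem_Rset {P : Finset (Finset (Fin (m * k)))} :
    P ∈ Rset C ↔ ∃ c, Pcls C c = P := by
  simp [Rset]

lemma blk_card {c : Fin k} {j : Fin m} : (blk C c j).card = k := by
  rw [blk, Finset.card_image_of_injective _ (fun g g' h => (pt_inj h).2),
    Finset.card_univ, Fintype.card_fin]

lemma blk_inj (hC : GoodCode k m C) (hk : 2 ≤ k) {c c' : Fin k} {j j' : Fin m}
    (h : blk C c j = blk C c' j') : c = c' ∧ j = j' := by
  have key : ∀ g : Fin k, C c' j' g = C c j g := by
    intro g
    have hmem : pt (C c j g) g ∈ blk C c' j' := h ▸ (mem_blk.2 ⟨g, rfl⟩)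
    obtain ⟨g₂, hg₂⟩ := mem_blk.1 hmem
    obtain ⟨hx, hg⟩ := pt_inj hg₂
    rw [hg] at hx
    exact hx
  rcases eq_or_ne c c' with rfl | hcc
  · refine ⟨rfl, ?_⟩
    by_contra hjj
    exact hC.1 c j' j (fun h2 => hjj h2.symm) ⟨0, by omega⟩ (key ⟨0, by omega⟩)
  · exfalso
    have hne : (⟨0, by omega⟩ : Fin k) ≠ ⟨1, by omega⟩ := by
      simp [Fin.ext_iff]
    exact hC.2 c' c (Ne.symm hcc) j' j ⟨0, by omega⟩ ⟨1, by omega⟩ hne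
      (key ⟨0, by omega⟩) (key ⟨1, by omega⟩)

lemma exists_unique_j (hC : GoodCode k m C) (c : Fin k) (x₁ : Fin m) (g : Fin k) :
    ∃! j, C c j g = x₁ := by
  have hinj : Function.Injective (fun j => C c j g) := by
    intro a b h
    by_contra hne
    exact hC.1 c a b hne g h
  obtain ⟨j, hj⟩ := (Finite.injective_iff_surjective.1 hinj) x₁
  exact ⟨j, hj, fun y hy => hinj (hy.trans hj.symm)⟩

lemma deg (hC : GoodCode k m C) (hk : 2 ≤ k) (x : Fin (m * k)) :
    ((Bset C).filter (fun b => x ∈ b)).card = k := by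
  obtain ⟨x₁, g, rfl⟩ := pt_surj x
  choose jf hjf using fun c => (exists_unique_j hC c x₁ g).exists
  have himg : (Bset C).filter (fun b => pt x₁ g ∈ b)
      = Finset.univ.image fun c => blk C c (jf c) := by
    ext b
    simp only [Finset.mem_filter, Finset.mem_image, Finset.mem_univ, true_and]
    constructor
    · rintro ⟨hb, hx⟩
      obtain ⟨c, j, rfl⟩ := mem_Bset.1 hb
      obtain ⟨g₂, hg₂⟩ := mem_blk.1 hx
      obtain ⟨hx2, hg2⟩ := pt_inj hg₂
      rw [hg2] at hx2
      have hj : j = jf c := (exists_unique_j hC c x₁ g).unique hx2 (hjf c)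
      exact ⟨c, by rw [hj]⟩
    · rintro ⟨c, rfl⟩
      exact ⟨mem_Bset.2 ⟨c, jf c, rfl⟩, mem_blk.2 ⟨g, by rw [hjf c]⟩⟩
  rw [himg, Finset.card_image_of_injective _
      (fun a b h => (blk_inj hC hk h).1), Finset.card_univ, Fintype.card_fin]

lemma isConfig (hC : GoodCode k m C) (hk : 2 ≤ k) : IsConfig (m * k) k (Bset C) := by
  refine ⟨?_, ?_, ?_, fun x => deg hC hk x⟩
  · rw [Bset, Finset.card_image_of_injective _
      (fun p q h => Prod.ext (blk_inj hC hk h).1 (blk_inj hC hk h).2),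
      Finset.card_univ]
    simp [mul_comm]
  · rintro b hb
    obtain ⟨c, j, rfl⟩ := mem_Bset.1 hb
    exact blk_card
  · intro b₁ hb₁ b₂ hb₂ x y hxy hx1 hy1 hx2 hy2
    obtain ⟨c, j, rfl⟩ := mem_Bset.1 hb₁
    obtain ⟨c', j', rfl⟩ := mem_Bset.1 hb₂
    obtain ⟨gx, hgx⟩ := mem_blk.1 hx1
    obtain ⟨gx₂, hgx₂⟩ := mem_blk.1 hx2
    obtain ⟨gy, hgy⟩ := mem_blk.1 hy1
    obtain ⟨gy₂, hgy₂⟩ := mem_blk.1 hy2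
    obtain ⟨ex, egx⟩ := pt_inj (hgx₂.trans hgx.symm)
    obtain ⟨ey, egy⟩ := pt_inj (hgy₂.trans hgy.symm)
    rw [egx] at ex
    rw [egy] at ey
    -- ex : C c' j' gx = C c j gx, ey : C c' j' gy = C c j gy
    have hgxy : gx ≠ gy := by
      rintro rfl
      exact hxy (hgx.symm.trans hgy)
    rcases eq_or_ne c c' with rfl | hcc
    · rcases eq_or_ne j j' with rfl | hjj
      · rfl
      · exact absurd ex.symm (hC.1 c j j' hjj gx)
    · exact absurd ey (hC.2 c' c (Ne.symm hcc) j' j gx gy hgxy ex)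

lemma isRes (hC : GoodCode k m C) (hk : 2 ≤ k) (hm : 0 < m) :
    IsResolution (m * k) k (Bset C) (Rset C) := by
  have Pinj : ∀ c c' : Fin k, Pcls C c = Pcls C c' → c = c' := by
    intro c c' h
    have : blk C c ⟨0, hm⟩ ∈ Pcls C c' := h ▸ mem_Pcls.2 ⟨⟨0, hm⟩, rfl⟩
    obtain ⟨j', hj'⟩ := mem_Pcls.1 this
    exact (blk_inj hC hk hj').1.symm
  refine ⟨?_, ?_, ?_⟩
  · rw [Rset, Finset.card_image_of_injective _ (fun a b h => Pinj a b h),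
      Finset.card_univ, Fintype.card_fin]
  · intro P hP
    obtain ⟨c, rfl⟩ := mem_Rset.1 hP
    refine ⟨?_, ?_, ?_⟩
    · intro b hb
      obtain ⟨j, rfl⟩ := mem_Pcls.1 hb
      exact mem_Bset.2 ⟨c, j, rfl⟩
    · intro x
      obtain ⟨x₁, g, rfl⟩ := pt_surj x
      obtain ⟨j, hj, -⟩ := exists_unique_j hC c x₁ g
      exact ⟨blk C c j, mem_Pcls.2 ⟨j, rfl⟩, mem_blk.2 ⟨g, by rw [hj]⟩⟩
    · intro b₁ hb₁ b₂ hb₂ hne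
      obtain ⟨j, rfl⟩ := mem_Pcls.1 hb₁
      obtain ⟨j', rfl⟩ := mem_Pcls.1 hb₂
      rw [Finset.disjoint_left]
      intro z hz1 hz2
      obtain ⟨g, hg⟩ := mem_blk.1 hz1
      obtain ⟨g₂, hg₂⟩ := mem_blk.1 hz2
      obtain ⟨e1, e2⟩ := pt_inj (hg₂.trans hg.symm)
      rw [e2] at e1
      have : j' = j := by
        by_contra hjj
        exact hC.1 c j' j hjj g e1
      exact hne (by rw [this])
  · intro b hb
    obtain ⟨c, j, rfl⟩ := mem_Bset.1 hb
    refine ⟨Pcls C c, ⟨mem_Rset.2 ⟨c, rfl⟩, mem_Pcls.2 ⟨j, rfl⟩⟩, ?_⟩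
    rintro P ⟨hP, hbP⟩
    obtain ⟨c', rfl⟩ := mem_Rset.1 hP
    obtain ⟨j', hj'⟩ := mem_Pcls.1 hbP
    rw [(blk_inj hC hk hj').1]

end RConf

theorem erc_of_code {k m : ℕ} (hk : 2 ≤ k) (hm : 0 < m)
    {C : Fin k → Fin m → Fin k → Fin m} (hC : GoodCode k m C) :
    ExistsResolvableConfig (m * k) k :=
  ⟨RConf.Bset C, RConf.Rset C, RConf.isConfig hC hk, RConf.isRes hC hk hm⟩

lemma config_lower {v k : ℕ} (hv : 0 < v) {B : Finset (Finset (Fin v))}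
    (h : IsConfig v k B) : k * (k - 1) + 1 ≤ v := by
  obtain ⟨hcard, hsize, hpair, hdeg⟩ := h
  set x : Fin v := ⟨0, hv⟩ with hx
  set S := B.filter (fun b => x ∈ b) with hS
  have hScard : S.card = k := hdeg x
  have hmem : ∀ b ∈ S, x ∈ b ∧ b ∈ B := fun b hb =>
    ⟨(Finset.mem_filter.1 hb).2, (Finset.mem_filter.1 hb).1⟩
  have hdisj : ∀ b₁ ∈ S, ∀ b₂ ∈ S, b₁ ≠ b₂ → Disjoint (b₁.erase x) (b₂.erase x) := by
    intro b₁ h1 b₂ h2 hne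
    rw [Finset.disjoint_left]
    intro y hy1 hy2
    have hyx : y ≠ x := Finset.ne_of_mem_erase hy1
    exact hne (hpair b₁ (hmem b₁ h1).2 b₂ (hmem b₂ h2).2 y x hyx
      (Finset.mem_of_mem_erase hy1) (hmem b₁ h1).1 (Finset.mem_of_mem_erase hy2) (hmem b₂ h2).1)
  have hbu : (S.biUnion fun b => b.erase x).card = ∑ b ∈ S, (b.erase x).card :=
    Finset.card_biUnion hdisj
  have hsum : ∑ b ∈ S, (b.erase x).card = k * (k - 1) := by
    have : ∀ b ∈ S, (b.erase x).card = k - 1 := fun b hb => by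
      rw [Finset.card_erase_of_mem (hmem b hb).1, hsize b (hmem b hb).2]
    rw [Finset.sum_congr rfl this, Finset.sum_const, hScard, smul_eq_mul]
  have hsub : (S.biUnion fun b => b.erase x) ⊆ Finset.univ.erase x := by
    intro y hy
    obtain ⟨b, hb, hyb⟩ := Finset.mem_biUnion.1 hy
    exact Finset.mem_erase.2 ⟨Finset.ne_of_mem_erase hyb, Finset.mem_univ y⟩
  have hle := Finset.card_le_card hsub
  rw [hbu, hsum, Finset.card_erase_of_mem (Finset.mem_univ x), Finset.card_univ,
    Fintype.card_fin] at hle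
  omega

lemma goodcode_cast {k m m' : ℕ} (h : m = m')
    (hc : ∃ C : Fin k → Fin m → Fin k → Fin m, GoodCode k m C) :
    ∃ C : Fin k → Fin m' → Fin k → Fin m', GoodCode k m' C := by
  subst h; exact hc

lemma exists_code_all (k : ℕ) (hk : 0 < k)
    (base : ∀ m, k ≤ m → m < 2 * k → ∃ C : Fin k → Fin m → Fin k → Fin m, GoodCode k m C) :
    ∀ m, k ≤ m → ∃ C : Fin k → Fin m → Fin k → Fin m, GoodCode k m C := by
  intro m
  induction m using Nat.strong_induction_on with
  | _ m ih =>
    intro hm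
    by_cases h2 : m < 2 * k
    · exact base m hm h2
    · obtain ⟨C1, h1⟩ := ih (m - k) (by omega) (by omega)
      obtain ⟨C2, hc2⟩ := base k le_rfl (by omega)
      exact goodcode_cast (by omega) ⟨codeSum C1 C2, goodCodeSum h1 hc2⟩

lemma erc_cast {v v' k : ℕ} (h : v = v') (he : ExistsResolvableConfig v k) :
    ExistsResolvableConfig v' k := by subst h; exact he

set_option maxHeartbeats 4000000 in
lemma base3 : ∀ m, 3 ≤ m → m < 2 * 3 → ∃ C : Fin 3 → Fin m → Fin 3 → Fin m, GoodCode 3 m C := by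
  intro m h1 h2
  interval_cases m
  · exact ⟨_, goodCode_of_check 3 3 (by norm_num) tbl33 rfl⟩
  · exact ⟨_, goodCode_of_check 3 4 (by norm_num) tbl34 rfl⟩
  · exact ⟨_, goodCode_of_check 3 5 (by norm_num) tbl35 rfl⟩

set_option maxHeartbeats 16000000 in
lemma base4 : ∀ m, 4 ≤ m → m < 2 * 4 → ∃ C : Fin 4 → Fin m → Fin 4 → Fin m, GoodCode 4 m C := by
  intro m h1 h2
  interval_cases m
  · exact ⟨_, goodCode_of_check 4 4 (by norm_num) tbl44 rfl⟩
  · exact ⟨_, goodCode_of_check 4 5 (by norm_num) tbl45 rfl⟩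
  · exact ⟨_, goodCode_of_check 4 6 (by norm_num) tbl46 rfl⟩
  · exact ⟨_, goodCode_of_check 4 7 (by norm_num) tbl47 rfl⟩

set_option maxHeartbeats 64000000 in
lemma base5 : ∀ m, 5 ≤ m → m < 2 * 5 → ∃ C : Fin 5 → Fin m → Fin 5 → Fin m, GoodCode 5 m C := by
  intro m h1 h2
  interval_cases m
  · exact ⟨_, goodCode_of_check 5 5 (by norm_num) tbl55 rfl⟩
  · exact ⟨_, goodCode_of_check 5 6 (by norm_num) tbl56 rfl⟩
  · exact ⟨_, goodCode_of_check 5 7 (by norm_num) tbl57 rfl⟩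
  · exact ⟨_, goodCode_of_check 5 8 (by norm_num) tbl58 rfl⟩
  · exact ⟨_, goodCode_of_check 5 9 (by norm_num) tbl59 rfl⟩

lemma main_aux (k : ℕ) (hk2 : 2 ≤ k)
    (hbase : ∀ m, k ≤ m → m < 2 * k → ∃ C : Fin k → Fin m → Fin k → Fin m, GoodCode k m C)
    (t : ℕ) (hv : 0 < k * t) :
    ExistsResolvableConfig (k * t) k ↔ k * t ≥ k ^ 2 := by
  constructor
  · rintro ⟨B, R, hconf, -⟩
    have hlow := config_lower hv hconf
    have ht : k ≤ t := by
      have h1 : k * (k - 1) < k * t := by omega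
      have h2 := Nat.lt_of_mul_lt_mul_left h1
      omega
    rw [pow_two]
    exact Nat.mul_le_mul le_rfl ht
  · intro hge
    rw [ge_iff_le, pow_two] at hge
    have ht : k ≤ t := Nat.le_of_mul_le_mul_left hge (by omega)
    obtain ⟨C, hC⟩ := exists_code_all k (by omega) hbase t ht
    exact erc_cast (mul_comm t k) (erc_of_code hk2 (by omega) hC)

/-- For k ∈ {3,4,5} and v a positive multiple of k, a resolvable
(v,k)-configuration exists if and only if v ≥ k². -/
theorem resolvable_config_small_k (k v : ℕ) (hk : k = 3 ∨ k = 4 ∨ k = 5)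
    (hv : 0 < v) (hdvd : k ∣ v) :
    ExistsResolvableConfig v k ↔ v ≥ k ^ 2 := by
  obtain ⟨t, rfl⟩ := hdvd
  rcases hk with rfl | rfl | rfl
  · exact main_aux 3 (by norm_num) base3 t hv
  · exact main_aux 4 (by norm_num) base4 t hv
  · exact main_aux 5 (by norm_num) base5 t hv
end

section
/- If q is a prime power and k is an integer with 2 ≤ k ≤ q, then there exists a resolvable (kq,k)-configuration. -/
theorem aux_config (k q : ℕ) (hk : 2 ≤ k) {F : Type} [Field F] [Fintype F]
    (e : Fin k × F ≃ Fin (k * q)) (a : Fin k ↪ F) :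
    ExistsResolvableConfig (k * q) k := by
  classical
  set blk : Fin k × F → Finset (Fin (k * q)) :=
    fun mc => Finset.univ.image (fun i : Fin k => e (i, a mc.1 * a i + mc.2)) with hblk
  have hmem : ∀ (m : Fin k) (c : F) (i : Fin k) (y : F),
      e (i, y) ∈ blk (m, c) ↔ y = a m * a i + c := by
    intro m c i y
    simp only [hblk, Finset.mem_image, Finset.mem_univ, true_and]
    constructor
    · rintro ⟨j, hj⟩
      have h := e.injective hj
      rw [Prod.mk.injEq] at h
      obtain ⟨rfl, h2⟩ := h
      exact h2.symm
    · intro h; exact ⟨i, by rw [h]⟩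
  let i0 : Fin k := ⟨0, by omega⟩
  let i1 : Fin k := ⟨1, by omega⟩
  have hi01 : a i0 ≠ a i1 := by
    intro h
    have := a.injective h
    simp [i0, i1, Fin.ext_iff] at this
  have hblkinj : Function.Injective blk := by
    rintro ⟨m, c⟩ ⟨m', c'⟩ h
    have h0 : ∀ i : Fin k, a m * a i + c = a m' * a i + c' := by
      intro i
      have hx : e (i, a m * a i + c) ∈ blk (m', c') := by
        rw [← h, hmem]
      exact (hmem m' c' i _).mp hx
    have e1 := h0 i0
    have e2 := h0 i1
    have hmm : (a m - a m') * (a i0 - a i1) = 0 := by linear_combination e1 - e2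
    rcases mul_eq_zero.mp hmm with hmm | hmm
    · have hm : a m = a m' := by linear_combination hmm
      have hc : c = c' := by linear_combination e1 - a i0 * hm
      have hm' : m = m' := a.injective hm
      simp [hm', hc]
    · exact absurd (by linear_combination hmm : a i0 = a i1) hi01
  have hcardblk : ∀ m c, (blk (m, c)).card = k := by
    intro m c
    rw [hblk]
    rw [Finset.card_image_of_injective _ (fun i j hij => by
      have h := e.injective hij
      rw [Prod.mk.injEq] at h
      exact h.1)]
    simp
  -- pair condition
  have hpair : ∀ (m : Fin k) (c : F) (m' : Fin k) (c' : F) (x y : Fin (k * q)),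
      x ≠ y → x ∈ blk (m, c) → y ∈ blk (m, c) → x ∈ blk (m', c') → y ∈ blk (m', c') →
      (m, c) = (m', c') := by
    intro m c m' c' x y hxy hx1 hy1 hx2 hy2
    obtain ⟨⟨i, u⟩, rfl⟩ : ∃ p, e p = x := ⟨e.symm x, e.apply_symm_apply x⟩
    obtain ⟨⟨j, v⟩, rfl⟩ : ∃ p, e p = y := ⟨e.symm y, e.apply_symm_apply y⟩
    rw [hmem] at hx1 hy1 hx2 hy2
    have hij : i ≠ j := by
      rintro rfl
      exact hxy (by rw [hx1, hy1])
    have haij : a i ≠ a j := fun h => hij (a.injective h)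
    have hmm : (a m - a m') * (a i - a j) = 0 := by
      linear_combination hx2 - hx1 + hy1 - hy2
    rcases mul_eq_zero.mp hmm with hmm | hmm
    · have hm : a m = a m' := by linear_combination hmm
      have hc : c = c' := by linear_combination hx2 - hx1 - a i * hm
      rw [a.injective hm, hc]
    · exact absurd (by linear_combination hmm : a i = a j) haij
  set B : Finset (Finset (Fin (k * q))) := Finset.univ.image blk with hB
  set P : Fin k → Finset (Finset (Fin (k * q))) :=
    fun m => Finset.univ.image (fun c : F => blk (m, c)) with hP
  set R : Finset (Finset (Finset (Fin (k * q)))) := Finset.univ.image P with hR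
  have hPinj : Function.Injective P := by
    intro m m' h
    have h0 : blk (m, 0) ∈ P m' := by
      rw [← h, hP]
      exact Finset.mem_image_of_mem _ (Finset.mem_univ 0)
    rw [hP] at h0
    simp only [Finset.mem_image, Finset.mem_univ, true_and] at h0
    obtain ⟨c', hc'⟩ := h0
    have := hblkinj hc'.symm
    exact (Prod.ext_iff.mp this).1
  refine ⟨B, R, ⟨?_, ?_, ?_, ?_⟩, ?_, ?_, ?_⟩
  · -- B.card = k * q
    rw [hB, Finset.card_image_of_injective _ hblkinj]
    simp [Fintype.card_congr e]
  · rintro b hb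
    rw [hB] at hb
    simp only [Finset.mem_image, Finset.mem_univ, true_and] at hb
    obtain ⟨⟨m, c⟩, rfl⟩ := hb
    exact hcardblk m c
  · intro b₁ hb₁ b₂ hb₂ x y hxy hx1 hy1 hx2 hy2
    rw [hB] at hb₁ hb₂
    simp only [Finset.mem_image, Finset.mem_univ, true_and] at hb₁ hb₂
    obtain ⟨⟨m, c⟩, rfl⟩ := hb₁
    obtain ⟨⟨m', c'⟩, rfl⟩ := hb₂
    rw [hpair m c m' c' x y hxy hx1 hy1 hx2 hy2]
  · -- degree
    intro x
    obtain ⟨⟨i, u⟩, rfl⟩ : ∃ p, e p = x := ⟨e.symm x, e.apply_symm_apply x⟩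
    have hfilter : B.filter (fun b => e (i, u) ∈ b)
        = Finset.univ.image (fun m : Fin k => blk (m, u - a m * a i)) := by
      ext b
      simp only [Finset.mem_filter, hB, Finset.mem_image, Finset.mem_univ, true_and]
      constructor
      · rintro ⟨⟨⟨m, c⟩, rfl⟩, hx⟩
        rw [hmem] at hx
        refine ⟨m, ?_⟩
        congr 1
        rw [Prod.mk.injEq]
        exact ⟨rfl, by linear_combination hx⟩
      · rintro ⟨m, rfl⟩
        refine ⟨⟨(m, u - a m * a i), rfl⟩, ?_⟩
        rw [hmem]; ring
    rw [hfilter, Finset.card_image_of_injective _ (fun m m' h => by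
      have := hblkinj h
      exact (Prod.ext_iff.mp this).1)]
    simp
  · -- R.card = k
    rw [hR, Finset.card_image_of_injective _ hPinj]
    simp
  · -- parallel classes
    intro Q hQ
    rw [hR] at hQ
    simp only [Finset.mem_image, Finset.mem_univ, true_and] at hQ
    obtain ⟨m, rfl⟩ := hQ
    refine ⟨?_, ?_, ?_⟩
    · intro b hb
      rw [hP] at hb
      simp only [Finset.mem_image, Finset.mem_univ, true_and] at hb
      obtain ⟨c, rfl⟩ := hb
      rw [hB]
      exact Finset.mem_image_of_mem _ (Finset.mem_univ (m, c))
    · intro x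
      obtain ⟨⟨i, u⟩, rfl⟩ : ∃ p, e p = x := ⟨e.symm x, e.apply_symm_apply x⟩
      refine ⟨blk (m, u - a m * a i), ?_, ?_⟩
      · rw [hP]; exact Finset.mem_image_of_mem _ (Finset.mem_univ _)
      · rw [hmem]; ring
    · intro b₁ hb₁ b₂ hb₂ hne
      rw [hP] at hb₁ hb₂
      simp only [Finset.mem_image, Finset.mem_univ, true_and] at hb₁ hb₂
      obtain ⟨c₁, rfl⟩ := hb₁
      obtain ⟨c₂, rfl⟩ := hb₂
      rw [Finset.disjoint_left]
      intro x hx1 hx2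
      obtain ⟨⟨i, u⟩, rfl⟩ : ∃ p, e p = x := ⟨e.symm x, e.apply_symm_apply x⟩
      rw [hmem] at hx1 hx2
      exact hne (by rw [show c₁ = c₂ by linear_combination hx2 - hx1])
  · -- each block in exactly one class
    intro b hb
    rw [hB] at hb
    simp only [Finset.mem_image, Finset.mem_univ, true_and] at hb
    obtain ⟨⟨m, c⟩, rfl⟩ := hb
    refine ⟨P m, ⟨?_, ?_⟩, ?_⟩
    · rw [hR]; exact Finset.mem_image_of_mem _ (Finset.mem_univ m)
    · rw [hP]; exact Finset.mem_image_of_mem _ (Finset.mem_univ c)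
    · rintro Q ⟨hQ, hbQ⟩
      rw [hR] at hQ
      simp only [Finset.mem_image, Finset.mem_univ, true_and] at hQ
      obtain ⟨m', rfl⟩ := hQ
      rw [hP] at hbQ
      simp only [Finset.mem_image, Finset.mem_univ, true_and] at hbQ
      obtain ⟨c', hc'⟩ := hbQ
      have h2 := (Prod.ext_iff.mp (hblkinj hc')).1
      simp only at h2
      rw [h2]

/-- If q is a prime power and 2 ≤ k ≤ q, then there exists a resolvable
(kq,k)-configuration. -/
theorem resolvable_config_prime_power (q k : ℕ) (hq : IsPrimePow q)
    (hk : 2 ≤ k) (hkq : k ≤ q) :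
    ExistsResolvableConfig (k * q) k := by
  obtain ⟨p, n, hp, hn, rfl⟩ := hq
  haveI : Fact p.Prime := ⟨hp.nat_prime⟩
  haveI : Fintype (GaloisField p n) := Fintype.ofFinite _
  have hcard : Fintype.card (GaloisField p n) = p ^ n := by rw [← Nat.card_eq_fintype_card]; exact GaloisField.card p n (by omega)
  have eF : GaloisField p n ≃ Fin (p ^ n) := (Fintype.equivFin _).trans (finCongr hcard)
  exact aux_config k (p ^ n) hk
    ((Equiv.prodCongr (Equiv.refl (Fin k)) eF).trans finProdFinEquiv)
    ((Fin.castLEEmb hkq).trans eF.symm.toEmbedding)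
end

section
/- Let k ≥ 3. If (V,ℬ) is a resolvable (k²,k)-configuration, then there exists a partition 𝒬 of V into k pairwise disjoint k-element blocks such that every pair of distinct points of V is contained in exactly one block of ℬ ∪ 𝒬; that is, ℬ ∪ 𝒬 is the block set of an affine plane of order k (a resolvable 2-(k²,k,1) design). Conversely, removing one parallel class from the resolution of an affine plane of order k yields a resolvable (k²,k)-configuration. In particular, a resolvable (k²,k)-configuration exists if and only if an affine plane of order k exists. -/
/-- An affine plane of order k on the point set `Fin (k^2)`: k²+k blocks of size k
such that every pair of distinct points lies in exactly one block. -/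
def IsAffinePlane (k : ℕ) (A : Finset (Finset (Fin (k ^ 2)))) : Prop :=
  A.card = k ^ 2 + k ∧
  (∀ b ∈ A, b.card = k) ∧
  (∀ x y : Fin (k ^ 2), x ≠ y → ∃! b, b ∈ A ∧ x ∈ b ∧ y ∈ b)

namespace RCfg

open Finset

/-- parallelism: two points never together in a block -/
def Par {v : ℕ} (B : Finset (Finset (Fin v))) (x y : Fin v) : Prop :=
  ∀ d ∈ B, x ∈ d → y ∉ d

instance parDecidable {v : ℕ} (B : Finset (Finset (Fin v))) (x y : Fin v) :
    Decidable (Par B x y) := by unfold Par; infer_instance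

lemma par_symm {v : ℕ} {B : Finset (Finset (Fin v))} {x y : Fin v}
    (h : Par B x y) : Par B y x :=
  fun d hd hyd hxd => h d hd hxd hyd

lemma class_unique_block {v : ℕ} {P : Finset (Finset (Fin v))}
    (hP : IsParallelClass v P) (x : Fin v) : ∃! b, b ∈ P ∧ x ∈ b := by
  obtain ⟨b, hb, hx⟩ := hP.1 x
  refine ⟨b, ⟨hb, hx⟩, ?_⟩
  rintro c ⟨hc, hxc⟩
  by_contra hne
  exact (Finset.disjoint_left.1 (hP.2 c hc b hb hne) hxc) hx

lemma parclass_card {v k : ℕ} (hk : 0 < k) (hv : v = k * k)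
    {P : Finset (Finset (Fin v))} (hP : IsParallelClass v P)
    (hcard : ∀ b ∈ P, b.card = k) : P.card = k := by
  have hbU : P.biUnion id = univ := by
    apply Finset.eq_univ_of_forall
    intro x
    obtain ⟨b, hb, hx⟩ := hP.1 x
    exact Finset.mem_biUnion.2 ⟨b, hb, hx⟩
  have h2 := Finset.card_biUnion (t := (id : Finset (Fin v) → Finset (Fin v)))
    (s := P) (fun b hb c hc hbc => hP.2 b hb c hc hbc)
  rw [hbU, Finset.card_univ, Fintype.card_fin] at h2
  have h3 : ∑ b ∈ P, (id b).card = P.card * k := by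
    simp only [id_eq]
    rw [Finset.sum_congr rfl (fun b hb => hcard b hb), Finset.sum_const, smul_eq_mul]
  rw [h3] at h2
  exact Nat.eq_of_mul_eq_mul_right hk (by rw [← h2, hv])

section Config
variable {k : ℕ} {B : Finset (Finset (Fin (k ^ 2)))}
  {R : Finset (Finset (Finset (Fin (k ^ 2))))}

lemma par_ne (hk : 3 ≤ k) (hB : IsConfig (k ^ 2) k B) {x y : Fin (k ^ 2)}
    (h : Par B x y) : x ≠ y := by
  rintro rfl
  have hcard := hB.2.2.2 x
  have hpos : 0 < (B.filter (fun b => x ∈ b)).card := by omega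
  obtain ⟨d, hd⟩ := Finset.card_pos.1 hpos
  have hd' := Finset.mem_filter.1 hd
  exact h d hd'.1 hd'.2 hd'.2

lemma inter_card_one (hk : 3 ≤ k) (hB : IsConfig (k ^ 2) k B)
    (hR : IsResolution (k ^ 2) k B R) {P : Finset (Finset (Fin (k ^ 2)))}
    {b c d : Finset (Fin (k ^ 2))} (hP : P ∈ R) (hb : b ∈ P) (hc : c ∈ P)
    (hcb : c ≠ b) {u : Fin (k ^ 2)} (hub : u ∈ b) (hd : d ∈ B) (hud : u ∈ d)
    (hdb : d ≠ b) : (d ∩ c).card = 1 := by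
  obtain ⟨hPsub, hPpar⟩ := hR.2.1 P hP
  have hk2 : (k : ℕ) ^ 2 = k * k := sq k
  have hPcard : P.card = k :=
    parclass_card (by omega) hk2 hPpar (fun e he => hB.2.1 e (hPsub he))
  have hbB : b ∈ B := hPsub hb
  -- the partition of d.erase u by the blocks of P other than b
  have hpart : d.erase u = (P.erase b).biUnion (fun c' => d ∩ c') := by
    ext w
    simp only [Finset.mem_erase, Finset.mem_biUnion, Finset.mem_inter]
    constructor
    · rintro ⟨hwu, hwd⟩
      obtain ⟨c'', hc'', hwc''⟩ := hPpar.1 w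
      refine ⟨c'', ⟨?_, hc''⟩, hwd, hwc''⟩
      intro hEq
      exact hdb (hB.2.2.1 d hd b hbB u w (Ne.symm hwu) hud hwd hub (hEq ▸ hwc''))
    · rintro ⟨c', ⟨hc'b, hc'P⟩, hwd, hwc'⟩
      refine ⟨?_, hwd⟩
      rintro rfl
      exact (Finset.disjoint_left.1 (hPpar.2 c' hc'P b hb hc'b) hwc') hub
  have hdisj : ∀ c₁ ∈ P.erase b, ∀ c₂ ∈ P.erase b, c₁ ≠ c₂ →
      Disjoint (d ∩ c₁) (d ∩ c₂) := by
    intro c₁ h₁ c₂ h₂ h12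
    exact Finset.disjoint_of_subset_left Finset.inter_subset_right
      (Finset.disjoint_of_subset_right Finset.inter_subset_right
        (hPpar.2 c₁ (Finset.mem_of_mem_erase h₁) c₂ (Finset.mem_of_mem_erase h₂) h12))
  have hsum : ∑ c' ∈ P.erase b, (d ∩ c').card = k - 1 := by
    rw [← Finset.card_biUnion hdisj, ← hpart,
      Finset.card_erase_of_mem hud, hB.2.1 d hd]
  have hle1 : ∀ c' ∈ P.erase b, (d ∩ c').card ≤ 1 := by
    intro c' hc'
    obtain ⟨hc'b, hc'P⟩ := Finset.mem_erase.1 hc'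
    apply Finset.card_le_one.2
    intro w₁ hw₁ w₂ hw₂
    by_contra hne
    obtain ⟨hw₁d, hw₁c⟩ := Finset.mem_inter.1 hw₁
    obtain ⟨hw₂d, hw₂c⟩ := Finset.mem_inter.1 hw₂
    have : d = c' := hB.2.2.1 d hd c' (hPsub hc'P) w₁ w₂ hne hw₁d hw₂d hw₁c hw₂c
    subst this
    exact (Finset.disjoint_left.1 (hPpar.2 d hc'P b hb hc'b) hud) hub
  have hcP : c ∈ P.erase b := Finset.mem_erase.2 ⟨hcb, hc⟩
  have hEcard : (P.erase b).card = k - 1 := by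
    rw [Finset.card_erase_of_mem hb, hPcard]
  have hrest : (d ∩ c).card + ∑ c' ∈ (P.erase b).erase c, (d ∩ c').card
      = ∑ c' ∈ P.erase b, (d ∩ c').card :=
    Finset.add_sum_erase _ (fun c' => (d ∩ c').card) hcP
  have hbound : ∑ c' ∈ (P.erase b).erase c, (d ∩ c').card ≤ k - 2 := by
    calc ∑ c' ∈ (P.erase b).erase c, (d ∩ c').card
        ≤ ((P.erase b).erase c).card * 1 := by
          apply Finset.sum_le_card_nsmul
          intro x hx
          exact hle1 x (Finset.mem_of_mem_erase hx)
      _ = k - 2 := by rw [mul_one, Finset.card_erase_of_mem hcP, hEcard]; omega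
  have h1 : (d ∩ c).card ≤ 1 := hle1 c hcP
  omega

lemma parallels_le_one (hk : 3 ≤ k) (hB : IsConfig (k ^ 2) k B)
    (hR : IsResolution (k ^ 2) k B R) {P : Finset (Finset (Fin (k ^ 2)))}
    {b c : Finset (Fin (k ^ 2))} (hP : P ∈ R) (hb : b ∈ P) (hc : c ∈ P)
    (hcb : c ≠ b) {u : Fin (k ^ 2)} (hub : u ∈ b) :
    (c.filter (fun w => Par B u w)).card ≤ 1 := by
  classical
  obtain ⟨hPsub, hPpar⟩ := hR.2.1 P hP
  have hbB : b ∈ B := hPsub hb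
  set T := B.filter (fun d => u ∈ d) with hT
  have hTcard : T.card = k := hB.2.2.2 u
  have hbT : b ∈ T := Finset.mem_filter.2 ⟨hbB, hub⟩
  set S := (T.erase b).biUnion (fun d => d ∩ c) with hS
  have hmemT : ∀ d ∈ T.erase b, d ∈ B ∧ u ∈ d ∧ d ≠ b := by
    intro d hd
    obtain ⟨hdb, hdT⟩ := Finset.mem_erase.1 hd
    obtain ⟨hdB, hud⟩ := Finset.mem_filter.1 hdT
    exact ⟨hdB, hud, hdb⟩
  have hdisj : ∀ d₁ ∈ T.erase b, ∀ d₂ ∈ T.erase b, d₁ ≠ d₂ →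
      Disjoint (d₁ ∩ c) (d₂ ∩ c) := by
    intro d₁ h₁ d₂ h₂ h12
    obtain ⟨h₁B, h₁u, -⟩ := hmemT d₁ h₁
    obtain ⟨h₂B, h₂u, -⟩ := hmemT d₂ h₂
    rw [Finset.disjoint_left]
    intro w hw₁ hw₂
    obtain ⟨hwd₁, hwc⟩ := Finset.mem_inter.1 hw₁
    obtain ⟨hwd₂, -⟩ := Finset.mem_inter.1 hw₂
    have hwu : w ≠ u := by
      rintro rfl
      exact (Finset.disjoint_left.1 (hPpar.2 c hc b hb hcb) hwc) hub
    exact h12 (hB.2.2.1 d₁ h₁B d₂ h₂B u w (Ne.symm hwu) h₁u hwd₁ h₂u hwd₂)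
  have hScard : S.card = k - 1 := by
    rw [hS, Finset.card_biUnion hdisj]
    have : ∀ d ∈ T.erase b, (d ∩ c).card = 1 := by
      intro d hd
      obtain ⟨hdB, hud, hdb⟩ := hmemT d hd
      exact inter_card_one hk hB hR hP hb hc hcb hub hdB hud hdb
    rw [Finset.sum_congr rfl this, Finset.sum_const, smul_eq_mul, mul_one,
      Finset.card_erase_of_mem hbT, hTcard]
  have hSsub : S ⊆ c := by
    intro w hw
    obtain ⟨d, -, hwdc⟩ := Finset.mem_biUnion.1 hw
    exact (Finset.mem_inter.1 hwdc).2
  have hdisjFS : Disjoint (c.filter (fun w => Par B u w)) S := by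
    rw [Finset.disjoint_left]
    intro w hwF hwS
    obtain ⟨-, hpar⟩ := Finset.mem_filter.1 hwF
    obtain ⟨d, hd, hwdc⟩ := Finset.mem_biUnion.1 hwS
    obtain ⟨hdB, hud, -⟩ := hmemT d hd
    exact hpar d hdB hud (Finset.mem_inter.1 hwdc).1
  have hUsub : c.filter (fun w => Par B u w) ∪ S ⊆ c :=
    Finset.union_subset (Finset.filter_subset _ _) hSsub
  have := Finset.card_le_card hUsub
  rw [Finset.card_union_of_disjoint hdisjFS, hScard, hB.2.1 c (hPsub hc)] at this
  omega

lemma par_trans (hk : 3 ≤ k) (hB : IsConfig (k ^ 2) k B)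
    (hR : IsResolution (k ^ 2) k B R) {x y z : Fin (k ^ 2)}
    (hxy : Par B x y) (hxz : Par B x z) (hyz : y ≠ z) : Par B y z := by
  classical
  intro blk hblk hyblk hzblk
  have hxblk : x ∉ blk := fun h => hxy blk hblk h hyblk
  obtain ⟨P, ⟨hPR, hblkP⟩, -⟩ := hR.2.2 blk hblk
  have hPpar := (hR.2.1 P hPR).2
  obtain ⟨b', ⟨hb'P, hxb'⟩, -⟩ := class_unique_block hPpar x
  have hb'ne : blk ≠ b' := fun h => hxblk (h ▸ hxb')
  have hle := parallels_le_one hk hB hR hPR hb'P hblkP hb'ne hxb'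
  have hy : y ∈ blk.filter (fun w => Par B x w) := Finset.mem_filter.2 ⟨hyblk, hxy⟩
  have hz : z ∈ blk.filter (fun w => Par B x w) := Finset.mem_filter.2 ⟨hzblk, hxz⟩
  have := Finset.one_lt_card.2 ⟨y, hy, z, hz, hyz⟩
  omega

end Config

section Q
variable {k : ℕ} {B : Finset (Finset (Fin (k ^ 2)))}
  {R : Finset (Finset (Finset (Fin (k ^ 2))))}

/-- the parallel class of a point -/
def q (B : Finset (Finset (Fin (k ^ 2)))) (x : Fin (k ^ 2)) : Finset (Fin (k ^ 2)) :=
  Finset.univ.filter (fun y => y = x ∨ Par B x y)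

lemma mem_q {x y : Fin (k ^ 2)} : y ∈ q B x ↔ y = x ∨ Par B x y := by
  simp [q]

lemma q_self (x : Fin (k ^ 2)) : x ∈ q B x := mem_q.2 (Or.inl rfl)

lemma q_card (hk : 3 ≤ k) (hB : IsConfig (k ^ 2) k B) (x : Fin (k ^ 2)) :
    (q B x).card = k := by
  classical
  set T := B.filter (fun d => x ∈ d) with hT
  have hTcard : T.card = k := hB.2.2.2 x
  set C := T.biUnion (fun d => d.erase x) with hC
  have hmemT : ∀ d ∈ T, d ∈ B ∧ x ∈ d := fun d hd => Finset.mem_filter.1 hd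
  have hdisj : ∀ d₁ ∈ T, ∀ d₂ ∈ T, d₁ ≠ d₂ → Disjoint (d₁.erase x) (d₂.erase x) := by
    intro d₁ h₁ d₂ h₂ h12
    rw [Finset.disjoint_left]
    intro w hw₁ hw₂
    obtain ⟨hwx, hwd₁⟩ := Finset.mem_erase.1 hw₁
    obtain ⟨-, hwd₂⟩ := Finset.mem_erase.1 hw₂
    exact h12 (hB.2.2.1 d₁ (hmemT d₁ h₁).1 d₂ (hmemT d₂ h₂).1 x w (Ne.symm hwx)
      (hmemT d₁ h₁).2 hwd₁ (hmemT d₂ h₂).2 hwd₂)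
  have hCcard : C.card = k * (k - 1) := by
    rw [hC, Finset.card_biUnion hdisj]
    have : ∀ d ∈ T, (d.erase x).card = k - 1 := by
      intro d hd
      rw [Finset.card_erase_of_mem (hmemT d hd).2, hB.2.1 d (hmemT d hd).1]
    rw [Finset.sum_congr rfl this, Finset.sum_const, smul_eq_mul, hTcard]
  have hqC : q B x = Finset.univ \ C := by
    ext y
    rw [mem_q, Finset.mem_sdiff]
    constructor
    · rintro (rfl | hpar)
      · refine ⟨Finset.mem_univ _, fun hmem => ?_⟩
        obtain ⟨d, hd, hyd⟩ := Finset.mem_biUnion.1 hmem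
        exact (Finset.mem_erase.1 hyd).1 rfl
      · refine ⟨Finset.mem_univ _, fun hmem => ?_⟩
        obtain ⟨d, hd, hyd⟩ := Finset.mem_biUnion.1 hmem
        exact hpar d (hmemT d hd).1 (hmemT d hd).2 (Finset.mem_erase.1 hyd).2
    · rintro ⟨-, h⟩
      by_cases hyx : y = x
      · exact Or.inl hyx
      · refine Or.inr (fun d hd hxd hyd => h ?_)
        exact Finset.mem_biUnion.2 ⟨d, Finset.mem_filter.2 ⟨hd, hxd⟩,
          Finset.mem_erase.2 ⟨hyx, hyd⟩⟩
  have hCsub : C ⊆ Finset.univ := Finset.subset_univ _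
  have hcards : (q B x).card + C.card = k ^ 2 := by
    rw [hqC, Finset.card_sdiff_add_card_eq_card hCsub, Finset.card_univ, Fintype.card_fin]
  obtain ⟨m, rfl⟩ : ∃ m, k = m + 1 := ⟨k - 1, by omega⟩
  have hid : (m + 1) * (m + 1 - 1) + (m + 1) = (m + 1) ^ 2 := by
    rw [Nat.add_sub_cancel]; ring
  rw [hCcard] at hcards
  linarith

lemma q_eq_of_mem (hk : 3 ≤ k) (hB : IsConfig (k ^ 2) k B)
    (hR : IsResolution (k ^ 2) k B R) {x z : Fin (k ^ 2)} (hz : z ∈ q B x) :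
    q B z = q B x := by
  rcases mem_q.1 hz with rfl | hxz
  · rfl
  · ext w
    rw [mem_q, mem_q]
    constructor
    · rintro (rfl | hzw)
      · exact Or.inr hxz
      · by_cases hwx : w = x
        · exact Or.inl hwx
        · exact Or.inr (par_trans hk hB hR (par_symm hxz) hzw
            (fun h => hwx h.symm))
    · rintro (rfl | hxw)
      · exact Or.inr (par_symm hxz)
      · by_cases hwz : w = z
        · exact Or.inl hwz
        · exact Or.inr (par_trans hk hB hR hxz hxw (fun h => hwz h.symm))

lemma part1 (hk : 3 ≤ k) (hB : IsConfig (k ^ 2) k B)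
    (hR : IsResolution (k ^ 2) k B R) :
    ∃ Q : Finset (Finset (Fin (k ^ 2))),
      Q.card = k ∧ (∀ s ∈ Q, s.card = k) ∧ IsParallelClass (k ^ 2) Q ∧
      IsAffinePlane k (B ∪ Q) ∧ Disjoint B Q := by
  classical
  set Q := Finset.univ.image (q B) with hQ
  have hqmem : ∀ x, q B x ∈ Q := fun x =>
    Finset.mem_image.2 ⟨x, Finset.mem_univ x, rfl⟩
  have hsizes : ∀ s ∈ Q, s.card = k := by
    intro s hs
    obtain ⟨x, -, rfl⟩ := Finset.mem_image.1 hs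
    exact q_card hk hB x
  have hQdisj : ∀ s ∈ Q, ∀ t ∈ Q, s ≠ t → Disjoint s t := by
    intro s hs t ht hst
    obtain ⟨x, -, rfl⟩ := Finset.mem_image.1 hs
    obtain ⟨y, -, rfl⟩ := Finset.mem_image.1 ht
    rw [Finset.disjoint_left]
    intro w hws hwt
    exact hst ((q_eq_of_mem hk hB hR hws).symm.trans (q_eq_of_mem hk hB hR hwt))
  have hQpar : IsParallelClass (k ^ 2) Q :=
    ⟨fun x => ⟨q B x, hqmem x, q_self x⟩, hQdisj⟩
  have hQcard : Q.card = k := by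
    have hbU : Q.biUnion id = Finset.univ := by
      apply Finset.eq_univ_of_forall
      intro x
      exact Finset.mem_biUnion.2 ⟨q B x, hqmem x, q_self x⟩
    have h2 := Finset.card_biUnion (t := (id : Finset (Fin (k ^ 2)) → _))
      (s := Q) (fun s hs t ht hst => hQdisj s hs t ht hst)
    rw [hbU, Finset.card_univ, Fintype.card_fin] at h2
    have h3 : ∑ s ∈ Q, (id s).card = Q.card * k := by
      simp only [id_eq]
      rw [Finset.sum_congr rfl hsizes, Finset.sum_const, smul_eq_mul]
    rw [h3] at h2
    have h4 : Q.card * k = k * k := by rw [← h2, sq]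
    exact Nat.eq_of_mul_eq_mul_right (by omega) h4
  have hQB : ∀ s ∈ Q, s ∉ B := by
    intro s hs hsB
    obtain ⟨x, -, rfl⟩ := Finset.mem_image.1 hs
    have h1 : 1 < (q B x).card := by rw [q_card hk hB x]; omega
    obtain ⟨y, hy, hyx⟩ := Finset.exists_mem_ne h1 x
    rcases mem_q.1 hy with rfl | hpar
    · exact hyx rfl
    · exact hpar (q B x) hsB (q_self x) hy
  have hdisjBQ : Disjoint B Q := by
    rw [Finset.disjoint_right]
    intro s hs hsB
    exact hQB s hs hsB
  have hplane : IsAffinePlane k (B ∪ Q) := by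
    refine ⟨?_, ?_, ?_⟩
    · rw [Finset.card_union_of_disjoint hdisjBQ, hB.1, hQcard]
    · intro b hb
      rcases Finset.mem_union.1 hb with h | h
      · exact hB.2.1 b h
      · exact hsizes b h
    · intro x y hxy
      by_cases hp : Par B x y
      · refine ⟨q B x, ⟨Finset.mem_union_right _ (hqmem x), q_self x,
          mem_q.2 (Or.inr hp)⟩, ?_⟩
        rintro e ⟨he, hxe, hye⟩
        rcases Finset.mem_union.1 he with heB | heQ
        · exact absurd hye (hp e heB hxe)
        · obtain ⟨z, -, rfl⟩ := Finset.mem_image.1 heQ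
          exact (q_eq_of_mem hk hB hR (x := z) (z := x) hxe).symm
      · rw [Par] at hp
        push_neg at hp
        obtain ⟨d, hdB, hxd, hyd⟩ := hp
        refine ⟨d, ⟨Finset.mem_union_left _ hdB, hxd, hyd⟩, ?_⟩
        rintro e ⟨he, hxe, hye⟩
        rcases Finset.mem_union.1 he with heB | heQ
        · exact hB.2.2.1 e heB d hdB x y hxy hxe hye hxd hyd
        · obtain ⟨z, -, rfl⟩ := Finset.mem_image.1 heQ
          have hzq : q B z = q B x :=
            (q_eq_of_mem hk hB hR (x := z) (z := x) hxe).symm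
          have hyq : y ∈ q B x := hzq ▸ hye
          rcases mem_q.1 hyq with rfl | hpar
          · exact absurd rfl hxy.symm
          · exact absurd hyd (hpar d hdB hxd)
  exact ⟨Q, hQcard, hsizes, hQpar, hplane, hdisjBQ⟩

end Q

section Plane
variable {k : ℕ} {A : Finset (Finset (Fin (k ^ 2)))}
  {RA : Finset (Finset (Finset (Fin (k ^ 2))))}

lemma plane_degree (hk : 3 ≤ k) (hA : IsAffinePlane k A) (x : Fin (k ^ 2)) :
    (A.filter (fun b => x ∈ b)).card = k + 1 := by
  classical
  set T := A.filter (fun b => x ∈ b) with hT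
  have hmemT : ∀ b ∈ T, b ∈ A ∧ x ∈ b := fun b hb => Finset.mem_filter.1 hb
  have hdisj : ∀ b₁ ∈ T, ∀ b₂ ∈ T, b₁ ≠ b₂ → Disjoint (b₁.erase x) (b₂.erase x) := by
    intro b₁ h₁ b₂ h₂ h12
    rw [Finset.disjoint_left]
    intro w hw₁ hw₂
    obtain ⟨hwx, hwb₁⟩ := Finset.mem_erase.1 hw₁
    obtain ⟨-, hwb₂⟩ := Finset.mem_erase.1 hw₂
    exact h12 ((hA.2.2 x w (Ne.symm hwx)).unique
      ⟨(hmemT b₁ h₁).1, (hmemT b₁ h₁).2, hwb₁⟩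
      ⟨(hmemT b₂ h₂).1, (hmemT b₂ h₂).2, hwb₂⟩)
  have hbU : T.biUnion (fun b => b.erase x) = Finset.univ.erase x := by
    ext y
    rw [Finset.mem_biUnion, Finset.mem_erase]
    constructor
    · rintro ⟨b, hb, hy⟩
      exact ⟨(Finset.mem_erase.1 hy).1, Finset.mem_univ y⟩
    · rintro ⟨hyx, -⟩
      obtain ⟨b, ⟨hbA, hxb, hyb⟩, -⟩ := hA.2.2 x y (Ne.symm hyx)
      exact ⟨b, Finset.mem_filter.2 ⟨hbA, hxb⟩, Finset.mem_erase.2 ⟨hyx, hyb⟩⟩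
  have h2 := Finset.card_biUnion hdisj
  rw [hbU, Finset.card_erase_of_mem (Finset.mem_univ x), Finset.card_univ,
    Fintype.card_fin] at h2
  have h3 : ∑ b ∈ T, (b.erase x).card = T.card * (k - 1) := by
    have : ∀ b ∈ T, (b.erase x).card = k - 1 := by
      intro b hb
      rw [Finset.card_erase_of_mem (hmemT b hb).2, hA.2.1 b (hmemT b hb).1]
    rw [Finset.sum_congr rfl this, Finset.sum_const, smul_eq_mul]
  rw [h3] at h2
  have hfact : (k + 1) * (k - 1) = k ^ 2 - 1 := by
    obtain ⟨m, rfl⟩ : ∃ m, k = m + 1 := ⟨k - 1, by omega⟩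
    have e1 : (m + 1 + 1) * (m + 1 - 1) = m * m + 2 * m := by
      rw [Nat.add_sub_cancel]; ring
    have e2 : (m + 1) ^ 2 = m * m + 2 * m + 1 := by ring
    rw [e1, e2, Nat.add_sub_cancel]
  have h4 : T.card * (k - 1) = (k + 1) * (k - 1) := by rw [hfact, ← h2]
  exact Nat.eq_of_mul_eq_mul_right (by omega) h4

lemma part2 (hk : 3 ≤ k) (hA : IsAffinePlane k A)
    (hRA : IsResolution (k ^ 2) (k + 1) A RA)
    {P : Finset (Finset (Fin (k ^ 2)))} (hP : P ∈ RA) :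
    IsConfig (k ^ 2) k (A \ P) ∧ IsResolution (k ^ 2) k (A \ P) (RA.erase P) := by
  classical
  obtain ⟨hPsub, hPpar⟩ := hRA.2.1 P hP
  have hk2 : (k : ℕ) ^ 2 = k * k := sq k
  have hPcard : P.card = k :=
    parclass_card (by omega) hk2 hPpar (fun e he => hA.2.1 e (hPsub he))
  have hconfig : IsConfig (k ^ 2) k (A \ P) := by
    refine ⟨?_, ?_, ?_, ?_⟩
    · rw [Finset.card_sdiff_of_subset hPsub, hA.1, hPcard]
      omega
    · intro b hb
      exact hA.2.1 b (Finset.mem_sdiff.1 hb).1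
    · intro b₁ h₁ b₂ h₂ x y hxy hx₁ hy₁ hx₂ hy₂
      exact (hA.2.2 x y hxy).unique
        ⟨(Finset.mem_sdiff.1 h₁).1, hx₁, hy₁⟩ ⟨(Finset.mem_sdiff.1 h₂).1, hx₂, hy₂⟩
    · intro x
      obtain ⟨bx, ⟨hbxP, hxbx⟩, hbxu⟩ := class_unique_block hPpar x
      have hbxT : bx ∈ A.filter (fun b => x ∈ b) :=
        Finset.mem_filter.2 ⟨hPsub hbxP, hxbx⟩
      have hfe : (A \ P).filter (fun b => x ∈ b)
          = (A.filter (fun b => x ∈ b)).erase bx := by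
        ext e
        rw [Finset.mem_filter, Finset.mem_sdiff, Finset.mem_erase, Finset.mem_filter]
        constructor
        · rintro ⟨⟨heA, heP⟩, hxe⟩
          exact ⟨fun h => heP (h ▸ hbxP), heA, hxe⟩
        · rintro ⟨hne, heA, hxe⟩
          exact ⟨⟨heA, fun heP => hne (hbxu e ⟨heP, hxe⟩)⟩, hxe⟩
      rw [hfe, Finset.card_erase_of_mem hbxT, plane_degree hk hA x]
      omega
  refine ⟨hconfig, ?_, ?_, ?_⟩
  · rw [Finset.card_erase_of_mem hP, hRA.1]
    omega
  · intro P' hP'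
    obtain ⟨hne, hP'RA⟩ := Finset.mem_erase.1 hP'
    obtain ⟨hsub', hpar'⟩ := hRA.2.1 P' hP'RA
    refine ⟨?_, hpar'⟩
    intro b hb
    rw [Finset.mem_sdiff]
    refine ⟨hsub' hb, fun hbP => ?_⟩
    obtain ⟨P₀, -, hu⟩ := hRA.2.2 b (hsub' hb)
    exact hne ((hu P' ⟨hP'RA, hb⟩).trans (hu P ⟨hP, hbP⟩).symm)
  · intro b hb
    obtain ⟨hbA, hbP⟩ := Finset.mem_sdiff.1 hb
    obtain ⟨P₀, ⟨hP₀RA, hbP₀⟩, hu⟩ := hRA.2.2 b hbA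
    have hne : P₀ ≠ P := fun h => hbP (h ▸ hbP₀)
    refine ⟨P₀, ⟨Finset.mem_erase.2 ⟨hne, hP₀RA⟩, hbP₀⟩, ?_⟩
    rintro P₁ ⟨hP₁, hbP₁⟩
    exact hu P₁ ⟨(Finset.mem_erase.1 hP₁).2, hbP₁⟩

end Plane

end RCfg

/-- A resolvable (k²,k)-configuration is equivalent to an affine plane of order k
(k ≥ 3): (1) any resolvable (k²,k)-configuration extends, by one further parallel
class 𝒬, to an affine plane of order k; (2) removing one parallel class from a
resolution of an affine plane of order k yields a resolvable (k²,k)-configuration;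
(3) hence a resolvable (k²,k)-configuration exists iff an affine plane of order k
exists. -/
theorem resolvable_config_iff_affine_plane (k : ℕ) (hk : 3 ≤ k) :
    (∀ (B : Finset (Finset (Fin (k ^ 2)))) (R : Finset (Finset (Finset (Fin (k ^ 2))))),
      IsConfig (k ^ 2) k B → IsResolution (k ^ 2) k B R →
      ∃ Q : Finset (Finset (Fin (k ^ 2))),
        Q.card = k ∧ (∀ q ∈ Q, q.card = k) ∧ IsParallelClass (k ^ 2) Q ∧
        IsAffinePlane k (B ∪ Q)) ∧
    (∀ (A : Finset (Finset (Fin (k ^ 2)))) (RA : Finset (Finset (Finset (Fin (k ^ 2))))),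
      IsAffinePlane k A → IsResolution (k ^ 2) (k + 1) A RA →
      ∀ P ∈ RA, IsConfig (k ^ 2) k (A \ P) ∧
        IsResolution (k ^ 2) k (A \ P) (RA.erase P)) ∧
    (ExistsResolvableConfig (k ^ 2) k ↔
      ∃ (A : Finset (Finset (Fin (k ^ 2)))) (RA : Finset (Finset (Finset (Fin (k ^ 2))))),
        IsAffinePlane k A ∧ IsResolution (k ^ 2) (k + 1) A RA) := by
    classical
  refine ⟨?_, ?_, ?_⟩
  · intro B R hB hR
    obtain ⟨Q, h1, h2, h3, h4, -⟩ := RCfg.part1 hk hB hR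
    exact ⟨Q, h1, h2, h3, h4⟩
  · intro A RA hA hRA P hP
    exact RCfg.part2 hk hA hRA hP
  · constructor
    · rintro ⟨B, R, hB, hR⟩
      obtain ⟨Q, hQcard, hQsizes, hQpar, hplane, hdisj⟩ := RCfg.part1 hk hB hR
      have hQR : Q ∉ R := by
        intro hQR
        have hQne : Q.Nonempty := Finset.card_pos.1 (by omega)
        obtain ⟨s, hs⟩ := hQne
        exact Finset.disjoint_right.1 hdisj hs ((hR.2.1 Q hQR).1 hs)
      refine ⟨B ∪ Q, insert Q R, hplane, ?_, ?_, ?_⟩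
      · rw [Finset.card_insert_of_notMem hQR, hR.1]
      · intro P' hP'
        rcases Finset.mem_insert.1 hP' with rfl | h
        · exact ⟨Finset.subset_union_right, hQpar⟩
        · exact ⟨(hR.2.1 P' h).1.trans Finset.subset_union_left, (hR.2.1 P' h).2⟩
      · intro b hb
        rcases Finset.mem_union.1 hb with hbB | hbQ
        · have hbQ : b ∉ Q := Finset.disjoint_left.1 hdisj hbB
          obtain ⟨P₀, ⟨hP₀, hbP₀⟩, hu⟩ := hR.2.2 b hbB
          refine ⟨P₀, ⟨Finset.mem_insert_of_mem hP₀, hbP₀⟩, ?_⟩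
          rintro P₁ ⟨hP₁, hbP₁⟩
          rcases Finset.mem_insert.1 hP₁ with rfl | h₁
          · exact absurd hbP₁ hbQ
          · exact hu P₁ ⟨h₁, hbP₁⟩
        · have hbB : b ∉ B := Finset.disjoint_right.1 hdisj hbQ
          refine ⟨Q, ⟨Finset.mem_insert_self _ _, hbQ⟩, ?_⟩
          rintro P₁ ⟨hP₁, hbP₁⟩
          rcases Finset.mem_insert.1 hP₁ with rfl | h₁
          · rfl
          · exact absurd ((hR.2.1 P₁ h₁).1 hbP₁) hbB
    · rintro ⟨A, RA, hA, hRA⟩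
      have hne : RA.Nonempty := Finset.card_pos.1 (by rw [hRA.1]; omega)
      obtain ⟨P, hP⟩ := hne
      obtain ⟨hc, hr⟩ := RCfg.part2 hk hA hRA hP
      exact ⟨A \ P, RA.erase P, hc, hr⟩
end
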